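/- arXiv:1603.05214 — 17 statements merged into one kernel-verified Lean document; each statement's English description precedes it below -/
import Mathlib

section
/- Let C be a cartesian closed category and ◇ : C → C an endofunctor equipped with a natural transformation p : Id ⟶ ◇ which preserves finite products, and suppose that for every morphism f : ◇X → X there exists a unique morphism f‡ : 1 → X with f‡ = f ∘ p_X ∘ f‡ (a weak model of guarded fixpoint terms). Then (C, ◇) is a unique guarded fixpoint category: for every f : ◇X × Y → X there exists a unique morphism s : Y → X with s = f ∘ (p_X × id_Y) ∘ ⟨s, id_Y⟩. -/
open CategoryTheory CategoryTheory.Limits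

universe v u

/-!
Morphisms `Y ⟶ X` correspond to global elements `𝟙_ C ⟶ X^Y`. Transposing `f : ◇X × Y ⟶ X`
gives `◇(X^Y) ⟶ X^Y`, evaluating under the delay through `p_Y` and `◇(Y × X^Y) ≅ ◇Y × ◇(X^Y)`;
under the correspondence its global guarded fixpoints are exactly the solutions of `f`.
-/

namespace GuardedFixpoint

open MonoidalCategory CartesianMonoidalCategory MonoidalClosed

variable {C : Type*} [Category C]

lemma existsUnique_fixpoint_iff_of_iso {A B X : C} (e : A ≅ B) (h : X ⟶ X) :
    (∃! s : A ⟶ X, s = s ≫ h) ↔ ∃! s : B ⟶ X, s = s ≫ h :=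
  e.homFromEquiv.existsUnique_congr fun s => by simp [Iso.homFromEquiv]

variable [CartesianMonoidalCategory C]

lemma lift_tensorHom_comp_prodLift {W A A' B B' Z : C} (s : W ⟶ A) (t : W ⟶ B) (a : A ⟶ A')
    (b : B ⟶ B') (h : A' ⨯ B' ⟶ Z) :
    lift s t ≫ (a ⊗ₘ b) ≫ prod.lift (fst A' B') (snd A' B') ≫ h =
      prod.lift s t ≫ prod.map a b ≫ h := by
  simp only [← Category.assoc]
  congr 1
  ext <;> simp

variable (D : C ⥤ C) (p : 𝟭 C ⟶ D)

lemma tensorHom_app_comp_inv_prodComparison (A B : C)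
    [IsIso (CartesianMonoidalCategory.prodComparison D A B)] :
    (p.app A ⊗ₘ p.app B) ≫ inv (CartesianMonoidalCategory.prodComparison D A B) =
      p.app (A ⊗ B) := by
  rw [IsIso.comp_inv_eq]
  ext <;> simpa using p.naturality _

lemma existsUnique_tensorUnit_fixpoint_of_terminal
    (hweak : ∀ (Z : C) (g : D.obj Z ⟶ Z), ∃! t : ⊤_ C ⟶ Z, t = t ≫ p.app Z ≫ g)
    (Z : C) (g : D.obj Z ⟶ Z) : ∃! t : 𝟙_ C ⟶ Z, t = t ≫ p.app Z ≫ g :=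
  (existsUnique_fixpoint_iff_of_iso (terminalIsoIsTerminal isTerminalTensorUnit) _).mp
    (hweak Z g)

variable [MonoidalClosed C] [PreservesFiniteProducts D]

noncomputable def delayedTranspose {X Y : C} (f : D.obj X ⊗ Y ⟶ X) :
    D.obj ((ihom Y).obj X) ⟶ (ihom Y).obj X :=
  curry (lift ((p.app Y ⊗ₘ 𝟙 _) ≫ inv (CartesianMonoidalCategory.prodComparison D Y _) ≫
    D.map ((ihom.ev Y).app X)) (fst _ _) ≫ f)

lemma curry'_comp_app_comp_delayedTranspose {X Y : C} (f : D.obj X ⊗ Y ⟶ X) (s : Y ⟶ X) :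
    curry' s ≫ p.app _ ≫ delayedTranspose D p f =
      curry' (lift s (𝟙 Y) ≫ (p.app X ⊗ₘ 𝟙 Y) ≫ f) := by
  have delayed_ev : Y ◁ p.app _ ≫ (p.app Y ⊗ₘ 𝟙 _) ≫
      inv (CartesianMonoidalCategory.prodComparison D Y _) ≫ D.map ((ihom.ev Y).app X) =
        (ihom.ev Y).app X ≫ p.app X := by
    rw [tensorHom_id, ← Category.assoc, ← tensorHom_def', ← Category.assoc,
      tensorHom_app_comp_inv_prodComparison]
    exact (p.naturality _).symm
  apply uncurry'_injective
  rw [uncurry'_curry', uncurry', uncurry_natural_left, uncurry_natural_left, delayedTranspose,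
    uncurry_curry, comp_lift_assoc, delayed_ev, whiskerLeft_fst, comp_lift_assoc,
    whiskerLeft_curry'_ihom_ev_app_assoc, whiskerLeft_fst, ← Category.assoc,
    ← Category.assoc (lift s _)]
  refine eq_whisker ?_ f
  ext <;> simp

theorem existsUnique_guardedFixpoint
    (hweak : ∀ (Z : C) (g : D.obj Z ⟶ Z), ∃! t : 𝟙_ C ⟶ Z, t = t ≫ p.app Z ≫ g)
    {X Y : C} (f : D.obj X ⊗ Y ⟶ X) :
    ∃! s : Y ⟶ X, s = lift s (𝟙 Y) ≫ (p.app X ⊗ₘ 𝟙 Y) ≫ f := by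
  refine (curryHomEquiv'.existsUnique_congr fun s => ?_).mpr (hweak _ (delayedTranspose D p f))
  rw [curryHomEquiv'_apply, curry'_comp_app_comp_delayedTranspose]
  exact curryHomEquiv'.injective.eq_iff.symm

end GuardedFixpoint

/-- **Weak models of guarded fixpoint terms which are cartesian closed are unique guarded
fixpoint categories.**  Let `C` be cartesian closed, `◇ : C ⥤ C` be a pointed endofunctor
(with point `p : Id ⟶ ◇`) preserving finite products, such that every `f : ◇X ⟶ X` has a
unique "global" fixpoint `s : 1 ⟶ X` with `s = f ∘ p_X ∘ s`.  Then for every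
`f : ◇X × Y ⟶ X` there is a unique `s : Y ⟶ X` with `s = f ∘ (p_X × id_Y) ∘ ⟨s, id_Y⟩`. -/
theorem weakModel_isUniqueGuardedFixpointCategory
    {C : Type u} [Category.{v} C] [CartesianMonoidalCategory C] [MonoidalClosed C]
    (D : C ⥤ C) (p : 𝟭 C ⟶ D) [PreservesFiniteProducts D]
    (hweak : ∀ (X : C) (f : D.obj X ⟶ X), ∃! s : ⊤_ C ⟶ X, s = s ≫ p.app X ≫ f) :
    ∀ (X Y : C) (f : D.obj X ⨯ Y ⟶ X),
      ∃! s : Y ⟶ X, s = prod.lift s (𝟙 Y) ≫ prod.map (p.app X) (𝟙 Y) ≫ f := by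
  intro X Y f
  simpa only [GuardedFixpoint.lift_tensorHom_comp_prodLift] using
    GuardedFixpoint.existsUnique_guardedFixpoint D p
      (GuardedFixpoint.existsUnique_tensorUnit_fixpoint_of_terminal D p hweak)
      (prod.lift (CartesianMonoidalCategory.fst _ _) (CartesianMonoidalCategory.snd _ _) ≫ f)
end

section
/- Let C be a category with finite products, ◇ : C → C a pointed endofunctor with point p : Id ⟶ ◇, and † a family of operations †_{X,Y} : Hom(◇X × Y, X) → Hom(Y, X) (not assumed to satisfy the fixpoint identity). For each object X define f_X = ◇π_r × id_X : ◇(◇X × X) × X → ◇X × X and q_X = π_ℓ ∘ f_X† : X → ◇X. If † satisfies the parameter identity (P) and uniformity (U), then q is a natural transformation Id ⟶ ◇, i.e. ◇h ∘ q_X = q_Y ∘ h for every h : X → Y. -/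
open CategoryTheory CategoryTheory.Limits

universe v u

variable {C : Type u} [Category.{v} C] [HasFiniteProducts C]

/-- `f_X = ◇π_r × id_X : ◇(◇X × X) × X ⟶ ◇X × X`. -/
noncomputable def fAux (D : C ⥤ C) (X : C) :
    D.obj (D.obj X ⨯ X) ⨯ X ⟶ D.obj X ⨯ X :=
  prod.map (D.map prod.snd) (𝟙 X)

/-- If an operator `† : Hom(◇X × Y, X) → Hom(Y, X)` (not assumed to satisfy the fixpoint
identity) satisfies the parameter identity (P) and uniformity (U), then
`q_X = π_ℓ ∘ (f_X)† : X ⟶ ◇X` is natural in `X`. -/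
theorem q_natural (D : C ⥤ C) (p : 𝟭 C ⟶ D)
    (dag : ∀ {X Y : C}, (D.obj X ⨯ Y ⟶ X) → (Y ⟶ X))
    -- (P) parameter identity
    (hparam : ∀ {X Y Z : C} (f : D.obj X ⨯ Y ⟶ X) (h : Z ⟶ Y),
      dag (prod.map (𝟙 (D.obj X)) h ≫ f) = h ≫ dag f)
    -- (U) uniformity
    (hunif : ∀ {X X' Y : C} (f : D.obj X ⨯ Y ⟶ X) (g : D.obj X' ⨯ Y ⟶ X') (h : X ⟶ X'),
      f ≫ h = prod.map (D.map h) (𝟙 Y) ≫ g → dag f ≫ h = dag g) :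
    ∀ {X Y : C} (h : X ⟶ Y),
      (dag (fAux D X) ≫ prod.fst) ≫ D.map h = h ≫ (dag (fAux D Y) ≫ prod.fst) := by
  intro X Y h
  have key : dag (fAux D X) ≫ prod.map (D.map h) h
      = h ≫ dag (fAux D Y) := by
    rw [← hparam (fAux D Y) h]
    apply hunif
    simp only [fAux]
    ext <;> simp [← Functor.map_comp]
  have := key =≫ (prod.fst : D.obj Y ⨯ Y ⟶ D.obj Y)
  simpa using this
end

section
/- Let C be a category with finite products, ◇ : C → C a pointed endofunctor with point p : Id ⟶ ◇, and † a family of operations †_{X,Y} : Hom(◇X × Y, X) → Hom(Y, X). For each object X define f_X = ◇π_r × id_X : ◇(◇X × X) × X → ◇X × X and q_X = π_ℓ ∘ f_X† : X → ◇X. If † satisfies the fixpoint identity (every f† satisfies f† = f ∘ (p_X × id_Y) ∘ ⟨f†, id_Y⟩), then q_X = p_X for every object X. -/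
open CategoryTheory CategoryTheory.Limits

universe v u

variable {C : Type u} [Category.{v} C] [HasFiniteProducts C]

theorem eq_prod_lift_of_eq_prod_lift_snd_comp {X Z : C} (φ : X ⟶ Z) (g : X ⟶ Z ⨯ X)
    (hg : g = prod.lift (g ≫ prod.snd ≫ φ) (𝟙 X)) : g = prod.lift φ (𝟙 X) := by
  have hsnd : g ≫ prod.snd = 𝟙 X := by rw [hg, prod.lift_snd]
  rwa [← Category.assoc, hsnd, Category.id_comp] at hg

/-- Naturality of `p` along `π_r` is what moves the point past `◇π_r`. -/
theorem prod_lift_comp_map_point_comp_fAux (D : C ⥤ C) (p : 𝟭 C ⟶ D) {X : C}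
    (g : X ⟶ D.obj X ⨯ X) :
    prod.lift g (𝟙 X) ≫ prod.map (p.app (D.obj X ⨯ X)) (𝟙 X) ≫ fAux D X =
      prod.lift (g ≫ prod.snd ≫ p.app X) (𝟙 X) := by
  have hnat : p.app (D.obj X ⨯ X) ≫ D.map prod.snd = prod.snd ≫ p.app X :=
    (p.naturality prod.snd).symm
  simp only [fAux, prod.map_map, Category.comp_id, prod.lift_map, hnat, Functor.id_obj]

/-- If an operator `† : Hom(◇X × Y, X) → Hom(Y, X)` satisfies the fixpoint identity, then
`q_X = π_ℓ ∘ (f_X)† : X ⟶ ◇X` coincides with the point `p_X` for every object `X`. -/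
theorem q_eq_point (D : C ⥤ C) (p : 𝟭 C ⟶ D)
    (dag : ∀ {X Y : C}, (D.obj X ⨯ Y ⟶ X) → (Y ⟶ X))
    -- (†) fixpoint identity
    (hfix : ∀ {X Y : C} (f : D.obj X ⨯ Y ⟶ X),
      dag f = prod.lift (dag f) (𝟙 Y) ≫ prod.map (p.app X) (𝟙 Y) ≫ f) :
    ∀ X : C, dag (fAux D X) ≫ prod.fst = p.app X := by
  intro X
  have hunfold := hfix (fAux D X)
  rw [prod_lift_comp_map_point_comp_fAux] at hunfold
  rw [eq_prod_lift_of_eq_prod_lift_snd_comp (X := X) _ _ hunfold, prod.lift_fst]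
end

section
/- Every unique guarded fixpoint category is a uniform guarded Conway category: if for every f : ◇X × Y → X the morphism f† is the unique solution of f, then the operator † satisfies the fixpoint identity (†), the parameter identity (P), the composition identity (C), the double dagger identity (††), and uniformity (U). -/
open CategoryTheory CategoryTheory.Limits

universe v u

/-- A guarded Conway category structure: a guarded fixpoint operator `dag` satisfying the
fixpoint, parameter, (simplified) composition and double dagger identities. -/
structure IsGuardedConway {C : Type u} [Category.{v} C] [HasFiniteProducts C]
    (D : C ⥤ C) (p : 𝟭 C ⟶ D)
    (dag : ∀ {X Y : C}, (D.obj X ⨯ Y ⟶ X) → (Y ⟶ X)) : Prop where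
  fix : ∀ {X Y : C} (f : D.obj X ⨯ Y ⟶ X),
      dag f = prod.lift (dag f) (𝟙 Y) ≫ prod.map (p.app X) (𝟙 Y) ≫ f
  param : ∀ {X Y Z : C} (f : D.obj X ⨯ Y ⟶ X) (h : Z ⟶ Y),
      dag (prod.map (𝟙 (D.obj X)) h ≫ f) = h ≫ dag f
  comp : ∀ {X Y Z : C} (f : D.obj X ⨯ Y ⟶ Z) (g : Z ⟶ X),
      dag (f ≫ g) = dag (prod.map (D.map g) (𝟙 Y) ≫ f) ≫ g
  ddag : ∀ {X Y : C} (f : D.obj X ⨯ (D.obj X ⨯ Y) ⟶ X),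
      dag (dag f) = dag (prod.lift prod.fst (𝟙 (D.obj X ⨯ Y)) ≫ f)

/-!
By uniqueness, each identity reduces to exhibiting one side as a solution of the fixpoint
equation whose dagger is the other side. A solution `s` of `f` gives the solution `h ≫ s` of
`f` reindexed along `h` (parameter identity) and, whenever `h` intertwines `f` and `g`, the
solution `s ≫ h` of `g` (uniformity); a solution of `f†` solves the diagonal of `f` (double
dagger). The composition identity is uniformity along `g`, which intertwines
`(◇g × id) ≫ f` and `f ≫ g`.
-/

namespace CategoryTheory

variable {C : Type u} [Category.{v} C] [HasFiniteProducts C] {D : C ⥤ C}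

def IsGuardedSolution (p : 𝟭 C ⟶ D) {X Y : C} (f : D.obj X ⨯ Y ⟶ X) (s : Y ⟶ X) : Prop :=
  s = prod.lift s (𝟙 Y) ≫ prod.map (p.app X) (𝟙 Y) ≫ f

namespace IsGuardedSolution

variable {p : 𝟭 C ⟶ D} {X Y : C} {f : D.obj X ⨯ Y ⟶ X} {s : Y ⟶ X}

theorem iff_eq_lift_comp : IsGuardedSolution p f s ↔ s = prod.lift (s ≫ p.app X) (𝟙 Y) ≫ f := by
  simp [IsGuardedSolution]

theorem precomp (hs : IsGuardedSolution p f s) {Z : C} (h : Z ⟶ Y) :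
    IsGuardedSolution p (prod.map (𝟙 (D.obj X)) h ≫ f) (h ≫ s) := by
  rw [iff_eq_lift_comp] at hs ⊢
  conv_lhs => rw [hs]
  simp [prod.comp_lift_assoc]

theorem comp_of_comm (hs : IsGuardedSolution p f s) {X' : C} {g : D.obj X' ⨯ Y ⟶ X'}
    {h : X ⟶ X'} (hcomm : f ≫ h = prod.map (D.map h) (𝟙 Y) ≫ g) :
    IsGuardedSolution p g (s ≫ h) := by
  have pnat : h ≫ p.app X' = p.app X ≫ D.map h := by simpa using p.naturality h
  rw [iff_eq_lift_comp] at hs ⊢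
  conv_lhs => rw [hs]
  simp [hcomm, pnat]

theorem diagonal {f : D.obj X ⨯ (D.obj X ⨯ Y) ⟶ X} {t : D.obj X ⨯ Y ⟶ X}
    (ht : IsGuardedSolution p f t) (hs : IsGuardedSolution p t s) :
    IsGuardedSolution p (prod.lift prod.fst (𝟙 (D.obj X ⨯ Y)) ≫ f) s := by
  rw [iff_eq_lift_comp] at ht hs ⊢
  calc s = prod.lift (s ≫ p.app X) (𝟙 Y) ≫ t := hs
    _ = prod.lift (s ≫ p.app X) (𝟙 Y) ≫ prod.lift (t ≫ p.app X) (𝟙 _) ≫ f := by rw [← ht]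
    _ = prod.lift ((prod.lift (s ≫ p.app X) (𝟙 Y) ≫ t) ≫ p.app X)
          (prod.lift (s ≫ p.app X) (𝟙 Y)) ≫ f := by
        rw [prod.comp_lift_assoc, Category.comp_id, Category.assoc]
    _ = prod.lift (s ≫ p.app X) (prod.lift (s ≫ p.app X) (𝟙 Y)) ≫ f := by rw [← hs]
    _ = prod.lift (s ≫ p.app X) (𝟙 Y) ≫ prod.lift prod.fst (𝟙 _) ≫ f := by
        rw [prod.comp_lift_assoc, prod.lift_fst, Category.comp_id]

end IsGuardedSolution

end CategoryTheory

open CategoryTheory.IsGuardedSolution in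
/-- **Every unique guarded fixpoint category is a uniform guarded Conway category.**
If for every `f : ◇X × Y ⟶ X` the morphism `f†` is the unique solution of the fixpoint
equation `s = f ∘ (p_X × id_Y) ∘ ⟨s, id_Y⟩`, then `†` satisfies the Conway axioms
(fixpoint, parameter, composition, double dagger) and uniformity. -/
theorem uniqueGuardedFixpoint_isUniformGuardedConway
    {C : Type u} [Category.{v} C] [HasFiniteProducts C]
    (D : C ⥤ C) (p : 𝟭 C ⟶ D)
    (dag : ∀ {X Y : C}, (D.obj X ⨯ Y ⟶ X) → (Y ⟶ X))
    -- `dag f` is a solution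
    (hfix : ∀ {X Y : C} (f : D.obj X ⨯ Y ⟶ X),
      dag f = prod.lift (dag f) (𝟙 Y) ≫ prod.map (p.app X) (𝟙 Y) ≫ f)
    -- and it is the unique one
    (huniq : ∀ {X Y : C} (f : D.obj X ⨯ Y ⟶ X) (s : Y ⟶ X),
      s = prod.lift s (𝟙 Y) ≫ prod.map (p.app X) (𝟙 Y) ≫ f → s = dag f) :
    IsGuardedConway D p @dag ∧
    -- (U) uniformity
    (∀ {X X' Y : C} (f : D.obj X ⨯ Y ⟶ X) (g : D.obj X' ⨯ Y ⟶ X') (h : X ⟶ X'),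
      f ≫ h = prod.map (D.map h) (𝟙 Y) ≫ g → dag f ≫ h = dag g) := by
  have uniform {X X' Y : C} (f : D.obj X ⨯ Y ⟶ X) (g : D.obj X' ⨯ Y ⟶ X') (h : X ⟶ X')
      (hcomm : f ≫ h = prod.map (D.map h) (𝟙 Y) ≫ g) : dag f ≫ h = dag g :=
    huniq g _ (comp_of_comm (hfix f) hcomm)
  refine ⟨⟨hfix, fun f h => ?_, fun f g => ?_, fun f => ?_⟩, uniform⟩
  · exact (huniq _ _ (precomp (hfix f) h)).symm
  · exact (uniform _ (f ≫ g) g (Category.assoc _ _ _)).symm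
  · exact huniq _ _ (diagonal (hfix f) (hfix (dag f)))
end

section
/- Let (C, T, η, (-)*, Ω, σ, ω) be a let-ccc with a fixpoint object. Set ◇ = T, p = η, and for f : Y × TX → X define f† = f‡ ∘ (id_Y × ω) : Y → X. Then † satisfies the fixpoint identity, the parameter identity, the composition identity, and uniformity. -/
/-!
Everything is read off the universal property of `‡`. For the fixpoint identity, unfold
`ω = σ ∘ η_Ω ∘ ω` once and apply the defining square of `f‡`. Uniformity and the parameter
identity already hold for `‡`: `h ∘ f‡` satisfies the defining square of `g‡` (this needs
naturality of `η` and `(u*) ≫ T h = (u ≫ T h)*`, i.e. laws (a), (c), (d)), and `f‡ ∘ (h × id)`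
satisfies that of `(f ∘ (h × id))‡` (law (c)). Precomposing with `id × ω` passes them to `†`;
the composition identity is uniformity with `h = g`.
-/

open CategoryTheory CategoryTheory.Limits

universe v u

namespace LetCCC

variable {C : Type u} [Category.{v} C] [CartesianMonoidalCategory C]

section

variable (T : C → C) (η : ∀ A : C, A ⟶ T A)
  (star : ∀ {A B Z : C}, (A ⨯ B ⟶ T Z) → (A ⨯ T B ⟶ T Z))

/-- The action of the strong monad `T` on a morphism `g : Z ⟶ X` (regarding `g` as a
morphism `1 × Z ⟶ X`): `T g = (η_X ∘ g)*`. -/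
noncomputable def Tmap {Z X : C} (g : Z ⟶ X) : T Z ⟶ T X :=
  prod.lift (terminal.from (T Z)) (𝟙 (T Z)) ≫ star (prod.snd ≫ g ≫ η X)

variable (Ω : C) (dgr : ∀ {P A : C}, (P ⨯ T A ⟶ A) → (P ⨯ Ω ⟶ A)) (ω : ⊤_ C ⟶ Ω)

/-- The guarded fixpoint operator of a let-ccc with a fixpoint object:
`f† = f‡ ∘ (id_Y × ω) : Y ⟶ X` for `f : Y × TX ⟶ X` (here the delay `◇ = T` is written
in the right-hand factor of the product). -/
noncomputable def dag {Y X : C} (f : Y ⨯ T X ⟶ X) : Y ⟶ X :=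
  prod.lift (𝟙 Y) (terminal.from Y ≫ ω) ≫ dgr f

end

section Laws

variable (T : C → C) (η : ∀ A : C, A ⟶ T A)
  (star : ∀ {A B Z : C}, (A ⨯ B ⟶ T Z) → (A ⨯ T B ⟶ T Z))

def StarUnitLaw : Prop :=
  ∀ {A B Z : C} (f : A ⨯ B ⟶ T Z), prod.map (𝟙 A) (η B) ≫ star f = f

def StarNaturalInParam : Prop :=
  ∀ {A A' B Z : C} (f : A ⟶ A') (g : A' ⨯ B ⟶ T Z),
    star (prod.map f (𝟙 B) ≫ g) = prod.map f (𝟙 (T B)) ≫ star g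

def StarAssoc : Prop :=
  ∀ {A B Z W : C} (f : A ⨯ B ⟶ T Z) (g : A ⨯ Z ⟶ T W),
    star (prod.lift prod.fst f ≫ star g) = prod.lift prod.fst (star f) ≫ star g

def IsParamInitialAlgebra (Ω : C) (σ : T Ω ⟶ Ω)
    (dgr : ∀ {P A : C}, (P ⨯ T A ⟶ A) → (P ⨯ Ω ⟶ A)) : Prop :=
  ∀ {P A : C} (f : P ⨯ T A ⟶ A) (u : P ⨯ Ω ⟶ A),
    prod.map (𝟙 P) σ ≫ u = prod.lift prod.fst (star (u ≫ η A)) ≫ f ↔ u = dgr f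

end Laws

section

/- The laws are applied to `@star` and `@dgr`: plain `star` would be elaborated to
`fun {A B Z} => star`, and `rw` does not see through that eta-expansion. -/
variable {T : C → C} {η : ∀ A : C, A ⟶ T A}
  {star : ∀ {A B Z : C}, (A ⨯ B ⟶ T Z) → (A ⨯ T B ⟶ T Z)}
  {Ω : C} {σ : T Ω ⟶ Ω} {dgr : ∀ {P A : C}, (P ⨯ T A ⟶ A) → (P ⨯ Ω ⟶ A)} {ω : ⊤_ C ⟶ Ω}

theorem comp_Tmap (hc : StarNaturalInParam T @star) {A B Z X : C} (u : A ⨯ B ⟶ T Z)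
    (h : Z ⟶ X) :
    u ≫ Tmap T η star h = prod.lift prod.fst u ≫ star (prod.snd ≫ h ≫ η X) := by
  have hstar : star (prod.snd ≫ h ≫ η X : A ⨯ Z ⟶ T X) =
      prod.map (terminal.from A) (𝟙 (T Z)) ≫ star (prod.snd ≫ h ≫ η X) := by
    rw [← hc, prod.map_snd_assoc, Category.id_comp]
  have hlift : prod.lift prod.fst u ≫ prod.map (terminal.from A) (𝟙 (T Z)) =
      u ≫ prod.lift (terminal.from (T Z)) (𝟙 (T Z)) := by
    ext; simp
  rw [hstar, ← Category.assoc, hlift, Category.assoc, Tmap]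

theorem unit_comp_Tmap (ha : StarUnitLaw T η @star) {Z X : C} (h : Z ⟶ X) :
    η Z ≫ Tmap T η star h = h ≫ η X := by
  have hlift : η Z ≫ prod.lift (terminal.from (T Z)) (𝟙 (T Z)) =
      prod.lift (terminal.from Z) (𝟙 Z) ≫ prod.map (𝟙 _) (η Z) := by
    ext; simp
  rw [Tmap, ← Category.assoc, hlift, Category.assoc, ha, prod.lift_snd_assoc,
    Category.id_comp]

theorem star_comp_Tmap (hc : StarNaturalInParam T @star) (hd : StarAssoc T @star)
    {A B Z X : C} (u : A ⨯ B ⟶ T Z) (h : Z ⟶ X) :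
    star u ≫ Tmap T η star h = star (u ≫ Tmap T η star h) := by
  rw [comp_Tmap hc, comp_Tmap hc, hd]

theorem map_comp_dgr_eq (hfix : IsParamInitialAlgebra T η @star Ω σ @dgr) {P A : C}
    (f : P ⨯ T A ⟶ A) :
    prod.map (𝟙 P) σ ≫ dgr f = prod.lift prod.fst (star (dgr f ≫ η A)) ≫ f :=
  (hfix f _).2 rfl

theorem dgr_comp_of_comp_eq (ha : StarUnitLaw T η @star) (hc : StarNaturalInParam T @star)
    (hd : StarAssoc T @star) (hfix : IsParamInitialAlgebra T η @star Ω σ @dgr)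
    {Y X X' : C} {f : Y ⨯ T X ⟶ X} {g : Y ⨯ T X' ⟶ X'} {h : X ⟶ X'}
    (hfg : f ≫ h = prod.map (𝟙 Y) (Tmap T η star h) ≫ g) :
    dgr f ≫ h = dgr g := by
  refine (hfix g _).1 ?_
  calc prod.map (𝟙 Y) σ ≫ dgr f ≫ h
      = prod.lift prod.fst (star (dgr f ≫ η X)) ≫ f ≫ h := by
        rw [← Category.assoc, map_comp_dgr_eq hfix, Category.assoc]
    _ = prod.lift prod.fst (star (dgr f ≫ η X) ≫ Tmap T η star h) ≫ g := by
        rw [hfg, prod.lift_map_assoc, Category.comp_id]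
    _ = prod.lift prod.fst (star ((dgr f ≫ h) ≫ η X')) ≫ g := by
        rw [star_comp_Tmap hc hd, Category.assoc, unit_comp_Tmap ha, Category.assoc]

theorem map_comp_dgr (hc : StarNaturalInParam T @star)
    (hfix : IsParamInitialAlgebra T η @star Ω σ @dgr)
    {Y Z X : C} (f : Y ⨯ T X ⟶ X) (h : Z ⟶ Y) :
    prod.map h (𝟙 Ω) ≫ dgr f = dgr (prod.map h (𝟙 (T X)) ≫ f) := by
  refine (hfix _ _).1 ?_
  calc prod.map (𝟙 Z) σ ≫ prod.map h (𝟙 Ω) ≫ dgr f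
      = prod.map h (𝟙 (T Ω)) ≫ prod.map (𝟙 Y) σ ≫ dgr f := by
        simp only [prod.map_map_assoc, Category.id_comp, Category.comp_id]
    _ = prod.map h (𝟙 (T Ω)) ≫ prod.lift prod.fst (star (dgr f ≫ η X)) ≫ f := by
        rw [map_comp_dgr_eq hfix]
    _ = prod.lift prod.fst (star ((prod.map h (𝟙 Ω) ≫ dgr f) ≫ η X)) ≫
          prod.map h (𝟙 (T X)) ≫ f := by
        rw [Category.assoc, hc, ← Category.assoc, ← Category.assoc]
        congr 1
        ext <;> simp

theorem dag_eq_lift_dag_comp (ha : StarUnitLaw T η @star)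
    (hfix : IsParamInitialAlgebra T η @star Ω σ @dgr) (hω : ω ≫ η Ω ≫ σ = ω)
    {Y X : C} (f : Y ⨯ T X ⟶ X) :
    dag T Ω dgr ω f = prod.lift (𝟙 Y) (dag T Ω dgr ω f ≫ η X) ≫ f := by
  have hlift : prod.lift (𝟙 Y) (terminal.from Y ≫ ω) ≫ prod.map (𝟙 Y) (η Ω) ≫
      prod.map (𝟙 Y) σ = prod.lift (𝟙 Y) (terminal.from Y ≫ ω) := by
    ext <;> simp [hω]
  calc dag T Ω dgr ω f
      = prod.lift (𝟙 Y) (terminal.from Y ≫ ω) ≫ prod.map (𝟙 Y) (η Ω) ≫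
          prod.map (𝟙 Y) σ ≫ dgr f := ((reassoc_of% hlift) (dgr f)).symm
    _ = prod.lift (𝟙 Y) (terminal.from Y ≫ ω) ≫ prod.map (𝟙 Y) (η Ω) ≫
          prod.lift prod.fst (star (dgr f ≫ η X)) ≫ f := by
        rw [map_comp_dgr_eq hfix]
    _ = prod.lift (𝟙 Y) (dag T Ω dgr ω f ≫ η X) ≫ f := by
        simp only [← Category.assoc]
        congr 1
        apply prod.hom_ext
        · simp only [Category.assoc, prod.lift_fst]
          rw [prod.map_fst, Category.comp_id, prod.lift_fst]
        · simp only [Category.assoc, prod.lift_snd]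
          rw [ha, dag, Category.assoc]

theorem dag_map_comp (hc : StarNaturalInParam T @star)
    (hfix : IsParamInitialAlgebra T η @star Ω σ @dgr)
    {Y Z X : C} (f : Y ⨯ T X ⟶ X) (h : Z ⟶ Y) :
    dag T Ω dgr ω (prod.map h (𝟙 (T X)) ≫ f) = h ≫ dag T Ω dgr ω f := by
  have hlift : prod.lift (𝟙 Z) (terminal.from Z ≫ ω) ≫ prod.map h (𝟙 Ω) =
      h ≫ prod.lift (𝟙 Y) (terminal.from Y ≫ ω) := by
    ext <;> simp
  rw [dag, dag, ← map_comp_dgr hc hfix, ← Category.assoc, hlift, Category.assoc]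

theorem dag_comp_of_comp_eq (ha : StarUnitLaw T η @star) (hc : StarNaturalInParam T @star)
    (hd : StarAssoc T @star) (hfix : IsParamInitialAlgebra T η @star Ω σ @dgr)
    {Y X X' : C} {f : Y ⨯ T X ⟶ X} {g : Y ⨯ T X' ⟶ X'} {h : X ⟶ X'}
    (hfg : f ≫ h = prod.map (𝟙 Y) (Tmap T η star h) ≫ g) :
    dag T Ω dgr ω f ≫ h = dag T Ω dgr ω g := by
  rw [dag, dag, Category.assoc, dgr_comp_of_comp_eq ha hc hd hfix hfg]

theorem dag_comp (ha : StarUnitLaw T η @star) (hc : StarNaturalInParam T @star)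
    (hd : StarAssoc T @star) (hfix : IsParamInitialAlgebra T η @star Ω σ @dgr)
    {Y Z X : C} (f : Y ⨯ T X ⟶ Z) (g : Z ⟶ X) :
    dag T Ω dgr ω (f ≫ g) = dag T Ω dgr ω (prod.map (𝟙 Y) (Tmap T η star g) ≫ f) ≫ g :=
  (dag_comp_of_comp_eq ha hc hd hfix (Category.assoc _ _ _)).symm

end

theorem letccc_dagger_properties_general
    (T : C → C) (η : ∀ A : C, A ⟶ T A)
    (star : ∀ {A B Z : C}, (A ⨯ B ⟶ T Z) → (A ⨯ T B ⟶ T Z))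
    -- (a)
    (ha : ∀ {A B Z : C} (f : A ⨯ B ⟶ T Z), prod.map (𝟙 A) (η B) ≫ star f = f)
    -- (c)
    (hc : ∀ {A A' B Z : C} (f : A ⟶ A') (g : A' ⨯ B ⟶ T Z),
      star (prod.map f (𝟙 B) ≫ g) = prod.map f (𝟙 (T B)) ≫ star g)
    -- (d)
    (hd : ∀ {A B Z W : C} (f : A ⨯ B ⟶ T Z) (g : A ⨯ Z ⟶ T W),
      star (prod.lift prod.fst f ≫ star g) = prod.lift prod.fst (star f) ≫ star g)
    (Ω : C) (σ : T Ω ⟶ Ω)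
    (dgr : ∀ {P A : C}, (P ⨯ T A ⟶ A) → (P ⨯ Ω ⟶ A))
    -- `dgr f = f‡` satisfies the defining square of the fixpoint object ...
    (hdgr : ∀ {P A : C} (f : P ⨯ T A ⟶ A),
      prod.map (𝟙 P) σ ≫ dgr f = prod.lift prod.fst (star (dgr f ≫ η A)) ≫ f)
    -- ... and is the unique such morphism
    (hdgru : ∀ {P A : C} (f : P ⨯ T A ⟶ A) (u : P ⨯ Ω ⟶ A),
      prod.map (𝟙 P) σ ≫ u = prod.lift prod.fst (star (u ≫ η A)) ≫ f → u = dgr f)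
    (ω : ⊤_ C ⟶ Ω)
    -- `ω` is the unique fixpoint of `σ ∘ η_Ω`
    (hω : ω ≫ η Ω ≫ σ = ω) :
    -- (†) fixpoint identity
    (∀ (Y X : C) (f : Y ⨯ T X ⟶ X),
      dag T Ω dgr ω f = prod.lift (𝟙 Y) (dag T Ω dgr ω f ≫ η X) ≫ f) ∧
    -- (P) parameter identity
    (∀ (Y Z X : C) (f : Y ⨯ T X ⟶ X) (h : Z ⟶ Y),
      dag T Ω dgr ω (prod.map h (𝟙 (T X)) ≫ f) = h ≫ dag T Ω dgr ω f) ∧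
    -- (C) composition identity
    (∀ (Y Z X : C) (f : Y ⨯ T X ⟶ Z) (g : Z ⟶ X),
      dag T Ω dgr ω (f ≫ g) =
        dag T Ω dgr ω (prod.map (𝟙 Y) (Tmap T η star g) ≫ f) ≫ g) ∧
    -- (U) uniformity
    (∀ (Y X X' : C) (f : Y ⨯ T X ⟶ X) (g : Y ⨯ T X' ⟶ X') (h : X ⟶ X'),
      f ≫ h = prod.map (𝟙 Y) (Tmap T η star h) ≫ g →
        dag T Ω dgr ω f ≫ h = dag T Ω dgr ω g) := by
  have hfix : IsParamInitialAlgebra T η @star Ω σ @dgr := fun f u =>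
    ⟨hdgru f u, fun hu => hu ▸ hdgr f⟩
  exact ⟨fun _ _ f => dag_eq_lift_dag_comp @ha hfix hω f,
    fun _ _ _ f h => dag_map_comp @hc hfix f h,
    fun _ _ _ f g => dag_comp @ha @hc @hd hfix f g,
    fun _ _ _ _ _ _ hfg => dag_comp_of_comp_eq @ha @hc @hd hfix hfg⟩

/-- **Let-ccc's with a fixpoint object are guarded fixpoint categories satisfying
(P), (C) and (U).**  Let `(C, T, η, (-)*, Ω, σ, ω)` be a let-ccc with a fixpoint object:
`C` is cartesian closed, `(T, η, (-)*)` is a strong monad in extension form, `σ : TΩ ⟶ Ω`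
has the (parametrized) universal property that every `f : P × TA ⟶ A` admits a unique
`f‡ : P × Ω ⟶ A` with `f‡ ∘ (id × σ) = f ∘ ⟨π_ℓ, (η ∘ f‡)*⟩`, and `ω : 1 ⟶ Ω` is the
unique fixpoint of `σ ∘ η_Ω`.  Then the operator `f† = f‡ ∘ (id_Y × ω)` satisfies the
fixpoint identity, the parameter identity, the composition identity and uniformity. -/
theorem letccc_dagger_properties [MonoidalClosed C]
    (T : C → C) (η : ∀ A : C, A ⟶ T A)
    (star : ∀ {A B Z : C}, (A ⨯ B ⟶ T Z) → (A ⨯ T B ⟶ T Z))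
    -- (a)
    (ha : ∀ {A B Z : C} (f : A ⨯ B ⟶ T Z), prod.map (𝟙 A) (η B) ≫ star f = f)
    -- (b)
    (hb : ∀ {A B : C}, star (prod.snd ≫ η B) = (prod.snd : A ⨯ T B ⟶ T B))
    -- (c)
    (hc : ∀ {A A' B Z : C} (f : A ⟶ A') (g : A' ⨯ B ⟶ T Z),
      star (prod.map f (𝟙 B) ≫ g) = prod.map f (𝟙 (T B)) ≫ star g)
    -- (d)
    (hd : ∀ {A B Z W : C} (f : A ⨯ B ⟶ T Z) (g : A ⨯ Z ⟶ T W),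
      star (prod.lift prod.fst f ≫ star g) = prod.lift prod.fst (star f) ≫ star g)
    (Ω : C) (σ : T Ω ⟶ Ω)
    (dgr : ∀ {P A : C}, (P ⨯ T A ⟶ A) → (P ⨯ Ω ⟶ A))
    -- `dgr f = f‡` satisfies the defining square of the fixpoint object ...
    (hdgr : ∀ {P A : C} (f : P ⨯ T A ⟶ A),
      prod.map (𝟙 P) σ ≫ dgr f = prod.lift prod.fst (star (dgr f ≫ η A)) ≫ f)
    -- ... and is the unique such morphism
    (hdgru : ∀ {P A : C} (f : P ⨯ T A ⟶ A) (u : P ⨯ Ω ⟶ A),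
      prod.map (𝟙 P) σ ≫ u = prod.lift prod.fst (star (u ≫ η A)) ≫ f → u = dgr f)
    (ω : ⊤_ C ⟶ Ω)
    -- `ω` is the unique fixpoint of `σ ∘ η_Ω`
    (hω : ω ≫ η Ω ≫ σ = ω)
    (hωu : ∀ w : ⊤_ C ⟶ Ω, w ≫ η Ω ≫ σ = w → w = ω) :
    -- (†) fixpoint identity
    (∀ (Y X : C) (f : Y ⨯ T X ⟶ X),
      dag T Ω dgr ω f = prod.lift (𝟙 Y) (dag T Ω dgr ω f ≫ η X) ≫ f) ∧
    -- (P) parameter identity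
    (∀ (Y Z X : C) (f : Y ⨯ T X ⟶ X) (h : Z ⟶ Y),
      dag T Ω dgr ω (prod.map h (𝟙 (T X)) ≫ f) = h ≫ dag T Ω dgr ω f) ∧
    -- (C) composition identity
    (∀ (Y Z X : C) (f : Y ⨯ T X ⟶ Z) (g : Z ⟶ X),
      dag T Ω dgr ω (f ≫ g) =
        dag T Ω dgr ω (prod.map (𝟙 Y) (Tmap T η star g) ≫ f) ≫ g) ∧
    -- (U) uniformity
    (∀ (Y X X' : C) (f : Y ⨯ T X ⟶ X) (g : Y ⨯ T X' ⟶ X') (h : X ⟶ X'),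
      f ≫ h = prod.map (𝟙 Y) (Tmap T η star h) ≫ g →
        dag T Ω dgr ω f ≫ h = dag T Ω dgr ω g) :=
  letccc_dagger_properties_general T η star ha hc hd Ω σ dgr hdgr hdgru ω hω

end LetCCC
end

section
/- In the category of ω-complete partial orders (posets with suprema of ω-chains, not necessarily having a least element) and ω-continuous maps, with delay ◇X = X⊥ the lifting of X by a new least element ⊥, p_X : X → X⊥ the inclusion, and dagger defined for continuous f : X⊥ × Y → X by f† = f ∘ ⟨s, id_Y⟩ where s is the least fixed point of the continuous self-map Φ_f(m) = p_X ∘ f ∘ ⟨m, id_Y⟩ on the pointwise-ordered cpo of continuous maps Y → X⊥: this operator † satisfies the fixpoint identity, the parameter identity, the composition identity, the double dagger identity, and uniformity. -/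
/-!
In `X⊥` a chain is either constantly `⊥` or, from some index on, a chain of `X`; hence the
inclusion `X → X⊥` and the lifting `h⊥` of a continuous `h` are continuous. Then `Φ_f` is a
continuous operator on `Y → X⊥`, `kleeneFix f` is its Kleene least fixed point, and, as the
supremum of a chain of continuous iterates, it is continuous in the parameter.

The fixpoint identity is the fixed point equation. The parameter, composition and uniformity
identities are instances of one transfer principle: if `h ∘ f ∘ (id × r) = g ∘ (h⊥ × id)`, the
Kleene chain of `g` is the image under `h⊥` of that of `f`, and `h⊥` preserves its supremum.
For the double dagger identity write `s`, `t`, `u` for the least fixed points belonging to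
`f`, `f†` and the diagonal of `f`. Their fixed point equations give `s (t y, y) = t y`, so `t`
is a fixed point for the diagonal and `u ≤ t`; leastness of `s` at `(u y, y)` makes `u` a
prefixed point for `f†`, so `t ≤ u`.
-/

open OmegaCompletePartialOrder

universe u

namespace GuardedCPO

variable {X : Type u} [OmegaCompletePartialOrder X]

/-- The tail of a chain in `X⊥` which takes a non-`⊥` value `x₀` at index `n₀`:
it is a chain in `X`. -/
def tailChain (c : Chain (WithBot X)) (n₀ : ℕ) (x₀ : X)
    (h0 : c n₀ = (x₀ : WithBot X)) : Chain X where
  toFun k := (c (n₀ + k)).unbotD x₀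
  monotone' := by
    intro i j hij
    have hbi : (x₀ : WithBot X) ≤ c (n₀ + i) := h0 ▸ c.monotone (Nat.le_add_right _ _)
    have hbj : (x₀ : WithBot X) ≤ c (n₀ + j) := h0 ▸ c.monotone (Nat.le_add_right _ _)
    obtain ⟨xi, hxi, -⟩ := WithBot.coe_le_iff.mp hbi
    obtain ⟨xj, hxj, -⟩ := WithBot.coe_le_iff.mp hbj
    have hmono : (xi : WithBot X) ≤ (xj : WithBot X) := by
      rw [← hxi, ← hxj]; exact c.monotone (by omega)
    show (c (n₀ + i)).unbotD x₀ ≤ (c (n₀ + j)).unbotD x₀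
    rw [hxi, hxj, WithBot.unbotD_coe, WithBot.unbotD_coe]
    exact WithBot.coe_le_coe.mp hmono

lemma coe_tailChain (c : Chain (WithBot X)) (n₀ : ℕ) (x₀ : X)
    (h0 : c n₀ = (x₀ : WithBot X)) (k : ℕ) :
    ((tailChain c n₀ x₀ h0 k : X) : WithBot X) = c (n₀ + k) := by
  have hb : (x₀ : WithBot X) ≤ c (n₀ + k) := h0 ▸ c.monotone (Nat.le_add_right _ _)
  obtain ⟨xk, hxk, -⟩ := WithBot.coe_le_iff.mp hb
  show (((c (n₀ + k)).unbotD x₀ : X) : WithBot X) = c (n₀ + k)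
  rw [hxk, WithBot.unbotD_coe]

open Classical in
/-- The supremum of an `ω`-chain in the lifted cpo `X⊥ = WithBot X`. -/
noncomputable def lsup (c : Chain (WithBot X)) : WithBot X :=
  if h : ∃ (n : ℕ) (x : X), c n = (x : WithBot X) then
    ↑(ωSup (tailChain c h.choose h.choose_spec.choose h.choose_spec.choose_spec))
  else ⊥

/-- The lifting `X⊥` of an `ω`-complete partial order `X` by a new least element `⊥` is
again an `ω`-complete partial order. -/
noncomputable instance : OmegaCompletePartialOrder (WithBot X) :=
  { (inferInstance : PartialOrder (WithBot X)) with
    ωSup := lsup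
    le_ωSup := by
      intro c i
      cases hc : c i with
      | bot => exact bot_le
      | coe x =>
        have h : ∃ (n : ℕ) (x : X), c n = (x : WithBot X) := ⟨i, x, hc⟩
        rw [lsup, dif_pos h]
        have h0 := h.choose_spec.choose_spec
        have hcoe := coe_tailChain c h.choose h.choose_spec.choose h0 i
        calc (↑x : WithBot X) = c i := hc.symm
          _ ≤ c (h.choose + i) := c.monotone (by omega)
          _ = ↑(tailChain c h.choose h.choose_spec.choose h0 i) := hcoe.symm
          _ ≤ _ := WithBot.coe_le_coe.mpr (le_ωSup _ i)
    ωSup_le := by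
      intro c x hx
      rw [lsup]
      split_ifs with h
      · have h0 := h.choose_spec.choose_spec
        have hb : (h.choose_spec.choose : WithBot X) ≤ x := h0 ▸ hx h.choose
        obtain ⟨b, hb', -⟩ := WithBot.coe_le_iff.mp hb
        subst hb'
        refine WithBot.coe_le_coe.mpr (ωSup_le _ _ fun k => ?_)
        have := coe_tailChain c h.choose h.choose_spec.choose h0 k
        exact WithBot.coe_le_coe.mp (this ▸ hx (h.choose + k))
      · exact bot_le }

variable {Y : Type u} [OmegaCompletePartialOrder Y]

/-- The endomap `Φ_f(m) = p_X ∘ f ∘ ⟨m, id⟩` on maps `Y → X⊥` associated with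
`f : X⊥ × Y → X`. -/
def phi (f : WithBot X × Y → X) (m : Y → WithBot X) : Y → WithBot X :=
  fun y => ↑(f (m y, y))

lemma phi_mono {f : WithBot X × Y → X} (hf : Monotone f) : Monotone (phi f) :=
  fun _ _ hm y => WithBot.coe_le_coe.mpr (hf ⟨hm y, le_rfl⟩)

lemma seq_mono {f : WithBot X × Y → X} (hf : Monotone f) (y : Y) :
    Monotone fun n => (phi f)^[n] (fun _ => (⊥ : WithBot X)) y := by
  have key : ∀ n, (phi f)^[n] (fun _ => (⊥ : WithBot X)) ≤
      (phi f)^[n + 1] (fun _ => (⊥ : WithBot X)) := by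
    intro n
    induction n with
    | zero => exact fun y => bot_le
    | succ n ih =>
      rw [Function.iterate_succ_apply', Function.iterate_succ_apply']
      exact phi_mono hf ih
  exact monotone_nat_of_le_succ fun n => key n y

open Classical in
/-- The least fixed point of `Φ_f`, obtained as the supremum of the Kleene chain
`⊥ ≤ Φ_f(⊥) ≤ Φ_f²(⊥) ≤ …`. -/
noncomputable def kleeneFix (f : WithBot X × Y → X) : Y → WithBot X := fun y =>
  if hf : Monotone f then
    ωSup ⟨fun n => (phi f)^[n] (fun _ => (⊥ : WithBot X)) y, seq_mono hf y⟩
  else ⊥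

/-- The guarded fixpoint operator on `CPO` with delay `◇X = X⊥`:
`f† = f ∘ ⟨s, id⟩` where `s` is the least fixed point of `Φ_f`. -/
noncomputable def dag (f : WithBot X × Y → X) : Y → X := fun y => f (kleeneFix f y, y)


lemma ωSup_eq_bot_of_forall {c : Chain (WithBot X)} (h : ∀ n, c n = ⊥) : ωSup c = ⊥ :=
  le_bot_iff.mp (ωSup_le _ _ fun n => (h n).le)

lemma ωSup_eq_coe_ωSup_tailChain (c : Chain (WithBot X)) (n₀ : ℕ) (x₀ : X)
    (h0 : c n₀ = (x₀ : WithBot X)) : ωSup c = ↑(ωSup (tailChain c n₀ x₀ h0)) := by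
  apply le_antisymm
  · refine ωSup_le _ _ fun n => ?_
    calc c n ≤ c (n₀ + n) := c.monotone (Nat.le_add_left n n₀)
      _ = ↑(tailChain c n₀ x₀ h0 n) := (coe_tailChain c n₀ x₀ h0 n).symm
      _ ≤ _ := WithBot.coe_le_coe.mpr (le_ωSup _ n)
  · obtain ⟨b, hb, -⟩ := WithBot.coe_le_iff.mp (h0 ▸ le_ωSup c n₀ : (x₀ : WithBot X) ≤ ωSup c)
    rw [hb, WithBot.coe_le_coe]
    refine ωSup_le _ _ fun k => WithBot.coe_le_coe.mp ?_
    rw [coe_tailChain, ← hb]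
    exact le_ωSup c _

@[fun_prop]
lemma ωScottContinuous_coe : ωScottContinuous ((↑) : X → WithBot X) := by
  refine ωScottContinuous.of_monotone_map_ωSup ⟨WithBot.coe_mono, fun c => ?_⟩
  rw [ωSup_eq_coe_ωSup_tailChain _ 0 (c 0) rfl]
  congr 2
  ext k
  apply WithBot.coe_injective
  simpa using (coe_tailChain (c.map ⟨(↑), WithBot.coe_mono⟩) 0 (c 0) rfl k).symm

lemma _root_.OmegaCompletePartialOrder.ωScottContinuous.withBot_map {X' : Type u}
    [OmegaCompletePartialOrder X'] {h : X → X'} (hh : ωScottContinuous h) :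
    ωScottContinuous (WithBot.map h) := by
  refine ωScottContinuous.of_monotone_map_ωSup ⟨hh.monotone.withBot_map, fun c => ?_⟩
  by_cases hbot : ∀ n, c n = ⊥
  · rw [ωSup_eq_bot_of_forall hbot, ωSup_eq_bot_of_forall fun n => by simp [hbot n]]
    rfl
  push Not at hbot
  obtain ⟨n₀, hn₀⟩ := hbot
  obtain ⟨x₀, hx₀⟩ := WithBot.ne_bot_iff_exists.mp hn₀
  have hmap : c.map ⟨_, hh.monotone.withBot_map⟩ n₀ = ↑(h x₀) := by simp [← hx₀]
  rw [ωSup_eq_coe_ωSup_tailChain c n₀ x₀ hx₀.symm,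
    ωSup_eq_coe_ωSup_tailChain _ n₀ (h x₀) hmap, WithBot.map_coe, hh.map_ωSup]
  congr 2
  ext k
  apply WithBot.coe_injective
  rw [coe_tailChain]
  simp [← coe_tailChain c n₀ x₀ hx₀.symm k]

lemma ωScottContinuous_ωSup {α β : Type*} [OmegaCompletePartialOrder α]
    [OmegaCompletePartialOrder β] (c : Chain (α → β)) (hc : ∀ n, ωScottContinuous (c n)) :
    ωScottContinuous (ωSup c) :=
  (ωSup ⟨fun n => ContinuousHom.ofFun (c n) (hc n), fun _ _ h => c.monotone h⟩ :
    α →𝒄 β).ωScottContinuous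

section Kleene

variable {f : WithBot X × Y → X}

def kleeneChain (hf : Monotone f) (y : Y) : Chain (WithBot X) :=
  ⟨fun n => (phi f)^[n] (fun _ => ⊥) y, seq_mono hf y⟩

lemma kleeneChain_succ (hf : Monotone f) (y : Y) (n : ℕ) :
    kleeneChain hf y (n + 1) = ↑(f (kleeneChain hf y n, y)) :=
  congrFun (Function.iterate_succ_apply' (phi f) n _) y

lemma kleeneFix_apply_eq_ωSup (hf : Monotone f) (y : Y) :
    kleeneFix f y = ωSup (kleeneChain hf y) :=
  dif_pos hf

lemma kleeneFix_eq_ωSup_iterateChain (hf : Monotone f) :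
    kleeneFix f = ωSup (fixedPoints.iterateChain ⟨phi f, phi_mono hf⟩ ⊥ bot_le) :=
  funext (kleeneFix_apply_eq_ωSup hf)

lemma kleeneFix_le (hf : Monotone f) {y : Y} {x : WithBot X} (hx : ↑(f (x, y)) ≤ x) :
    kleeneFix f y ≤ x := by
  rw [kleeneFix_apply_eq_ωSup hf]
  refine ωSup_le _ _ fun n => ?_
  induction n with
  | zero => exact bot_le
  | succ n ih =>
    rw [kleeneChain_succ]
    exact (WithBot.coe_le_coe.mpr (hf (Prod.mk_le_mk.mpr ⟨ih, le_rfl⟩))).trans hx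

lemma ωScottContinuous_phi_apply (hf : ωScottContinuous f) {m : Y → WithBot X}
    (hm : ωScottContinuous m) : ωScottContinuous (phi f m) := by
  unfold phi; fun_prop

lemma ωScottContinuous_phi (hf : ωScottContinuous f) : ωScottContinuous (phi f) := by
  unfold phi; fun_prop

lemma ωScottContinuous_kleeneFix (hf : ωScottContinuous f) : ωScottContinuous (kleeneFix f) := by
  rw [kleeneFix_eq_ωSup_iterateChain hf.monotone]
  refine ωScottContinuous_ωSup _ fun n => ?_
  induction n with
  | zero => exact ωScottContinuous.const
  | succ n ih =>
    show ωScottContinuous ((phi f)^[n + 1] ⊥)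
    rw [Function.iterate_succ_apply']
    exact ωScottContinuous_phi_apply hf ih

lemma phi_kleeneFix (hf : ωScottContinuous f) : phi f (kleeneFix f) = kleeneFix f := by
  rw [kleeneFix_eq_ωSup_iterateChain hf.monotone]
  exact fixedPoints.ωSup_iterate_mem_fixedPoint
    (ContinuousHom.ofFun (phi f) (ωScottContinuous_phi hf)) ⊥ bot_le

lemma kleeneFix_apply_eq_coe (hf : ωScottContinuous f) (y : Y) :
    kleeneFix f y = ↑(f (kleeneFix f y, y)) :=
  (congrFun (phi_kleeneFix hf) y).symm

lemma dag_fixpoint (hf : ωScottContinuous f) : dag f = fun y => f (↑(dag f y), y) :=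
  funext fun y => congrArg (fun a => f (a, y)) (kleeneFix_apply_eq_coe hf y)

lemma ωScottContinuous_dag (hf : ωScottContinuous f) : ωScottContinuous (dag f) := by
  have := ωScottContinuous_kleeneFix hf
  unfold dag; fun_prop

end Kleene

section Uniformity

variable {X' Z : Type u} [OmegaCompletePartialOrder X'] [OmegaCompletePartialOrder Z]
  {f : WithBot X × Y → X} {g : WithBot X' × Z → X'} {h : X → X'} {r : Z → Y}

lemma kleeneFix_eq_map_kleeneFix (hf : Monotone f) (hg : Monotone g) (hh : ωScottContinuous h)
    (hfg : ∀ a z, h (f (a, r z)) = g (WithBot.map h a, z)) (z : Z) :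
    kleeneFix g z = WithBot.map h (kleeneFix f (r z)) := by
  have hchain : ∀ n, kleeneChain hg z n = WithBot.map h (kleeneChain hf (r z) n) := by
    intro n
    induction n with
    | zero => rfl
    | succ n ih => rw [kleeneChain_succ, kleeneChain_succ, ih, ← hfg, WithBot.map_coe]
  rw [kleeneFix_apply_eq_ωSup hg, kleeneFix_apply_eq_ωSup hf, hh.withBot_map.map_ωSup]
  exact congrArg ωSup (Chain.ext (funext hchain))

lemma apply_dag_eq_dag (hf : Monotone f) (hg : Monotone g) (hh : ωScottContinuous h)
    (hfg : ∀ a z, h (f (a, r z)) = g (WithBot.map h a, z)) (z : Z) :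
    h (dag f (r z)) = dag g z := by
  show h (f (kleeneFix f (r z), r z)) = g (kleeneFix g z, z)
  rw [kleeneFix_eq_map_kleeneFix hf hg hh hfg, hfg]

end Uniformity

lemma dag_dag {f : WithBot X × (WithBot X × Y) → X} (hf : ωScottContinuous f) :
    dag (dag f) = dag (fun a : WithBot X × Y => f (a.1, (a.1, a.2))) := by
  set D := fun a : WithBot X × Y => f (a.1, (a.1, a.2))
  have hD : ωScottContinuous D := by fun_prop
  set s := kleeneFix f
  set t := kleeneFix (dag f)
  set u := kleeneFix D
  have hs : ∀ p, s p = ↑(f (s p, p)) := kleeneFix_apply_eq_coe hf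
  have ht : ∀ y, t y = ↑(f (s (t y, y), (t y, y))) :=
    kleeneFix_apply_eq_coe (ωScottContinuous_dag hf)
  have hu : ∀ y, u y = ↑(f (u y, (u y, y))) := kleeneFix_apply_eq_coe hD
  have hst : ∀ y, s (t y, y) = t y := fun y => (hs _).trans (ht y).symm
  have htu : ∀ y, t y = u y := by
    intro y
    apply le_antisymm
    · refine kleeneFix_le (ωScottContinuous_dag hf).monotone ?_
      have hsu : s (u y, y) ≤ u y := kleeneFix_le hf.monotone (hu y).ge
      exact (WithBot.coe_le_coe.mpr (hf.monotone (Prod.mk_le_mk.mpr ⟨hsu, le_rfl⟩))).trans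
        (hu y).ge
    · refine kleeneFix_le hD.monotone (le_of_eq ?_)
      calc (↑(D (t y, y)) : WithBot X) = ↑(f (s (t y, y), (t y, y))) := by rw [hst]
        _ = t y := (ht y).symm
  funext y
  show f (s (t y, y), (t y, y)) = f (u y, (u y, y))
  rw [hst, htu]

/-- **The category `CPO` with the lifting delay `◇X = X⊥` and least fixed points is a
uniform guarded Conway category**: the operator `†` satisfies the fixpoint, parameter,
composition and double dagger identities, as well as uniformity.  (Morphisms are the
maps preserving suprema of `ω`-chains, i.e. `ω`-Scott-continuous maps; the point
`p_X : X → X⊥` is the inclusion `↑`.) -/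
theorem cpo_lift_guardedConway_uniform :
    -- (†) fixpoint identity
    (∀ (X Y : Type u) [OmegaCompletePartialOrder X] [OmegaCompletePartialOrder Y]
      (f : WithBot X × Y → X), ωScottContinuous f →
        dag f = fun y => f (↑(dag f y), y)) ∧
    -- (P) parameter identity
    (∀ (X Y Z : Type u) [OmegaCompletePartialOrder X] [OmegaCompletePartialOrder Y]
      [OmegaCompletePartialOrder Z] (f : WithBot X × Y → X) (h : Z → Y),
        ωScottContinuous f → ωScottContinuous h →
        dag (fun q : WithBot X × Z => f (q.1, h q.2)) = fun z => dag f (h z)) ∧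
    -- (C) composition identity
    (∀ (X Y Z : Type u) [OmegaCompletePartialOrder X] [OmegaCompletePartialOrder Y]
      [OmegaCompletePartialOrder Z] (f : WithBot X × Y → Z) (g : Z → X),
        ωScottContinuous f → ωScottContinuous g →
        dag (fun q => g (f q)) =
          fun y => g (dag (fun q : WithBot Z × Y => f (WithBot.map g q.1, q.2)) y)) ∧
    -- (††) double dagger identity
    (∀ (X Y : Type u) [OmegaCompletePartialOrder X] [OmegaCompletePartialOrder Y]
      (f : WithBot X × (WithBot X × Y) → X), ωScottContinuous f →
        dag (dag f) = dag (fun a : WithBot X × Y => f (a.1, (a.1, a.2)))) ∧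
    -- (U) uniformity
    (∀ (X X' Y : Type u) [OmegaCompletePartialOrder X] [OmegaCompletePartialOrder X']
      [OmegaCompletePartialOrder Y] (f : WithBot X × Y → X) (g : WithBot X' × Y → X')
      (h : X → X'), ωScottContinuous f → ωScottContinuous g → ωScottContinuous h →
        (∀ q : WithBot X × Y, h (f q) = g (WithBot.map h q.1, q.2)) →
        ∀ y, h (dag f y) = dag g y) := by
  refine ⟨fun X Y _ _ f hf => dag_fixpoint hf, ?_, ?_, fun X Y _ _ f hf => dag_dag hf, ?_⟩
  · intro X Y Z _ _ _ f h hf hh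
    funext z
    exact (apply_dag_eq_dag (h := id) hf.monotone
      (hf.monotone.comp (monotone_id.prodMap hh.monotone)) ωScottContinuous.id
      (fun a z => by rw [WithBot.map_id]; rfl) z).symm
  · intro X Y Z _ _ _ f g hf hg
    funext y
    exact (apply_dag_eq_dag (r := id)
      (hf.monotone.comp (hg.monotone.withBot_map.prodMap monotone_id))
      (hg.monotone.comp hf.monotone) hg (fun _ _ => rfl) y).symm
  · intro X X' Y _ _ _ f g h hf hg hh hfg
    exact apply_dag_eq_dag (r := id) hf.monotone hg.monotone hh fun a y => hfg (a, y)

end GuardedCPO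
end

section
/- Let (S, η, μ, S', σ, μ') be a completely iterative ideal monad on a category A with finite coproducts whose coproduct injections are monic. For every morphism f : X → S(S'X + Y) the morphism f̄ = μ_{X+Y} ∘ S(can) ∘ S(σ_X + η_Y) ∘ f : X → S(X + Y) is a guarded equation morphism, and its unique solution f† : X → SY is the unique morphism s : X → SY satisfying s = μ_Y ∘ S[s, η_Y] ∘ f̄; equivalently, the dual of the Kleisli category of S, with delay given by the canonical extension of S', is a unique guarded fixpoint category. -/
open CategoryTheory CategoryTheory.Limits

universe v u

/-- **Completely iterative monads give unique guarded fixpoint operators.**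
Let `(S, η, μ, S', σ, μ')` be a completely iterative ideal monad on a category `A` with
finite coproducts whose injections are monic.  Then for every `f : X ⟶ S(S'X + Y)` the
morphism `f̄ = μ ∘ S can ∘ S(σ + η) ∘ f : X ⟶ S(X + Y)` is a guarded equation morphism,
and it has a unique solution, i.e. there is a unique `s : X ⟶ SY` with
`s = μ_Y ∘ S[s, η_Y] ∘ f̄`. -/
theorem completelyIterative_uniqueGuardedFixpoint
    {A : Type u} [Category.{v} A] [HasFiniteCoproducts A]
    -- coproduct injections are monic
    (hinl : ∀ X Y : A, Mono (coprod.inl : X ⟶ X ⨿ Y))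
    (hinr : ∀ X Y : A, Mono (coprod.inr : Y ⟶ X ⨿ Y))
    (S S' : A ⥤ A) (η : 𝟭 A ⟶ S) (μ : S ⋙ S ⟶ S) (σ : S' ⟶ S) (μ' : S ⋙ S' ⟶ S')
    -- monad laws
    (hunit₁ : ∀ X : A, η.app (S.obj X) ≫ μ.app X = 𝟙 (S.obj X))
    (hunit₂ : ∀ X : A, S.map (η.app X) ≫ μ.app X = 𝟙 (S.obj X))
    (hassoc : ∀ X : A, S.map (μ.app X) ≫ μ.app X = μ.app (S.obj X) ≫ μ.app X)
    -- σ is a subfunctor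
    (hσmono : ∀ X : A, Mono (σ.app X))
    -- `S = S' + Id` with coproduct injections `σ` and `η`
    (hiso : ∀ X : A, IsIso (coprod.desc (σ.app X) (η.app X)))
    -- `μ` restricts to `μ'` along `σ`
    (hres : ∀ X : A, μ'.app X ≫ σ.app X = σ.app (S.obj X) ≫ μ.app X)
    -- the ideal monad is completely iterative: every guarded equation morphism has a
    -- unique solution
    (hci : ∀ {X Y : A} (f : X ⟶ S.obj (X ⨿ Y)),
      (∃ f₀ : X ⟶ S'.obj (X ⨿ Y) ⨿ Y,
        f = f₀ ≫ coprod.desc (σ.app (X ⨿ Y)) (coprod.inr ≫ η.app (X ⨿ Y))) →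
      ∃! s : X ⟶ S.obj Y, s = f ≫ S.map (coprod.desc s (η.app Y)) ≫ μ.app Y) :
    ∀ {X Y : A} (f : X ⟶ S.obj (S'.obj X ⨿ Y)),
      -- `f̄` is guarded ...
      (∃ f₀ : X ⟶ S'.obj (X ⨿ Y) ⨿ Y,
        f ≫ S.map (coprod.map (σ.app X) (η.app Y) ≫
              coprod.desc (S.map coprod.inl) (S.map coprod.inr)) ≫ μ.app (X ⨿ Y) =
          f₀ ≫ coprod.desc (σ.app (X ⨿ Y)) (coprod.inr ≫ η.app (X ⨿ Y))) ∧
      -- ... and has a unique solution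
      (∃! s : X ⟶ S.obj Y,
        s = (f ≫ S.map (coprod.map (σ.app X) (η.app Y) ≫
              coprod.desc (S.map coprod.inl) (S.map coprod.inr)) ≫ μ.app (X ⨿ Y)) ≫
            S.map (coprod.desc s (η.app Y)) ≫ μ.app Y) := by
  intro X Y f
  haveI := hiso (S'.obj (X ⨿ Y) ⨿ Y)
  -- step 1: can ∘ (σ + η) = h ≫ w
  have hstep1 : coprod.map (σ.app X) (η.app Y) ≫
      coprod.desc (S.map (coprod.inl : X ⟶ X ⨿ Y)) (S.map (coprod.inr : Y ⟶ X ⨿ Y)) =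
      coprod.map (S'.map (coprod.inl : X ⟶ X ⨿ Y)) (𝟙 Y) ≫
        coprod.desc (σ.app (X ⨿ Y)) (coprod.inr ≫ η.app (X ⨿ Y)) := by
    apply coprod.hom_ext
    · simp only [coprod.inl_map_assoc, coprod.inl_desc]
      exact (σ.naturality _).symm
    · simp only [coprod.inr_map_assoc, coprod.inr_desc, Category.id_comp]
      simpa using (η.naturality (coprod.inr : Y ⟶ X ⨿ Y)).symm
  -- step 2: S w ≫ μ factors as e ≫ w
  have hstep2 :
      (inv (coprod.desc (σ.app (S'.obj (X ⨿ Y) ⨿ Y)) (η.app (S'.obj (X ⨿ Y) ⨿ Y))) ≫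
        coprod.desc
          (S'.map (coprod.desc (σ.app (X ⨿ Y)) (coprod.inr ≫ η.app (X ⨿ Y))) ≫
            μ'.app (X ⨿ Y) ≫ coprod.inl)
          (𝟙 (S'.obj (X ⨿ Y) ⨿ Y))) ≫
        coprod.desc (σ.app (X ⨿ Y)) (coprod.inr ≫ η.app (X ⨿ Y)) =
      S.map (coprod.desc (σ.app (X ⨿ Y)) (coprod.inr ≫ η.app (X ⨿ Y))) ≫ μ.app (X ⨿ Y) := by
    rw [Category.assoc, IsIso.inv_comp_eq]
    apply coprod.hom_ext
    · rw [coprod.inl_desc_assoc, coprod.inl_desc_assoc, Category.assoc, Category.assoc,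
        coprod.inl_desc, ← σ.naturality_assoc, hres]
    · simp only [coprod.inr_desc_assoc, Category.id_comp]
      have hn := η.naturality (coprod.desc (σ.app (X ⨿ Y)) (coprod.inr ≫ η.app (X ⨿ Y)))
      simp only [Functor.id_obj, Functor.id_map] at hn
      rw [← Category.assoc, ← hn, Category.assoc, hunit₁, Category.comp_id]
      exact Category.id_comp _
  -- the factorization witness
  have hguard : f ≫ S.map (coprod.map (σ.app X) (η.app Y) ≫
        coprod.desc (S.map coprod.inl) (S.map coprod.inr)) ≫ μ.app (X ⨿ Y) =
      (f ≫ S.map (coprod.map (S'.map (coprod.inl : X ⟶ X ⨿ Y)) (𝟙 Y)) ≫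
        (inv (coprod.desc (σ.app (S'.obj (X ⨿ Y) ⨿ Y)) (η.app (S'.obj (X ⨿ Y) ⨿ Y))) ≫
          coprod.desc
            (S'.map (coprod.desc (σ.app (X ⨿ Y)) (coprod.inr ≫ η.app (X ⨿ Y))) ≫
              μ'.app (X ⨿ Y) ≫ coprod.inl)
            (𝟙 (S'.obj (X ⨿ Y) ⨿ Y)))) ≫
        coprod.desc (σ.app (X ⨿ Y)) (coprod.inr ≫ η.app (X ⨿ Y)) := by
    rw [hstep1, S.map_comp]
    simp only [Category.assoc, hstep2]
  exact ⟨⟨_, hguard⟩, hci _ ⟨_, hguard⟩⟩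
end

section
/- Every guarded Conway category (C, ◇, †) satisfies the Bekič identity: for all f : ◇X × ◇Y × A → X and g : ◇X × ◇Y × A → Y, (⟨f, g⟩ ∘ (can × id_A))† = ⟨e_L†, e_R†⟩, where can = ⟨◇π_ℓ, ◇π_r⟩ : ◇(X × Y) → ◇X × ◇Y, e_R = g ∘ ⟨p_X ∘ f†, id_{◇Y × A}⟩ : ◇Y × A → Y and e_L = f ∘ (id_{◇X} × ⟨p_Y ∘ e_R†, id_A⟩) : ◇X × A → X. -/
open CategoryTheory CategoryTheory.Limits

universe v u

attribute [local simp] prod.lift_fst prod.lift_snd prod.lift_fst_assoc prod.lift_snd_assoc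

namespace IsGuardedConway

variable {C : Type u} [Category.{v} C] [HasFiniteProducts C] {D : C ⥤ C} {p : 𝟭 C ⟶ D}
  {dag : ∀ {X Y : C}, (D.obj X ⨯ Y ⟶ X) → (Y ⟶ X)}

theorem dag_snd_comp (hC : IsGuardedConway D p @dag) {X B : C} (c : B ⟶ X) :
    dag (prod.snd ≫ c) = c := by
  rw [hC.fix]
  simp

theorem dag_map_fst_comp_lift (hC : IsGuardedConway D p @dag) {X Y B : C}
    (k₁ : D.obj X ⨯ B ⟶ X) (k₂ : D.obj X ⨯ B ⟶ Y) :
    dag (prod.map (D.map prod.fst) (𝟙 B) ≫ prod.lift k₁ k₂) =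
      prod.lift (dag k₁) (prod.lift (dag k₁ ≫ p.app X) (𝟙 B) ≫ k₂) := by
  have h₁ : dag (prod.map (D.map prod.fst) (𝟙 B) ≫ prod.lift k₁ k₂) ≫ prod.fst = dag k₁ := by
    simpa using (hC.comp (prod.lift k₁ k₂) prod.fst).symm
  refine prod.hom_ext (by simpa using h₁) ?_
  rw [hC.fix]
  simp only [Category.assoc, prod.lift_map_assoc, prod.lift_snd, Category.comp_id]
  rw [← p.naturality, Functor.id_map, reassoc_of% h₁]

theorem dag_map_snd_comp_lift (hC : IsGuardedConway D p @dag) {X Y B : C}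
    (k₁ : D.obj Y ⨯ B ⟶ X) (k₂ : D.obj Y ⨯ B ⟶ Y) :
    dag (prod.map (D.map prod.snd) (𝟙 B) ≫ prod.lift k₁ k₂) =
      prod.lift (prod.lift (dag k₂ ≫ p.app Y) (𝟙 B) ≫ k₁) (dag k₂) := by
  have h₂ : dag (prod.map (D.map prod.snd) (𝟙 B) ≫ prod.lift k₁ k₂) ≫ prod.snd = dag k₂ := by
    simpa using (hC.comp (prod.lift k₁ k₂) prod.snd).symm
  refine prod.hom_ext ?_ (by simpa using h₂)
  rw [hC.fix]
  simp only [Category.assoc, prod.lift_map_assoc, prod.lift_fst, Category.comp_id]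
  rw [← p.naturality, Functor.id_map, reassoc_of% h₂]

variable (D) in
noncomputable def canMap (X Y A : C) : D.obj (X ⨯ Y) ⨯ A ⟶ D.obj X ⨯ (D.obj Y ⨯ A) :=
  prod.lift (prod.fst ≫ D.map prod.fst) (prod.lift (prod.fst ≫ D.map prod.snd) prod.snd)

theorem canMap_eq_lift_map (X Y A : C) :
    canMap D X Y A = prod.lift (prod.fst ≫ D.map prod.fst) (prod.map (D.map prod.snd) (𝟙 A)) := by
  ext <;> simp [canMap]

theorem dag_lift_canMap_comp_left (hC : IsGuardedConway D p @dag) {X Y A : C}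
    (f : D.obj X ⨯ (D.obj Y ⨯ A) ⟶ X) (g : D.obj (X ⨯ Y) ⨯ A ⟶ Y) :
    dag (prod.lift (canMap D X Y A ≫ f) g) =
      dag (prod.lift (prod.map (D.map prod.snd) (𝟙 A) ≫ dag f) g) := by
  set F : D.obj (X ⨯ Y) ⨯ (D.obj (X ⨯ Y) ⨯ A) ⟶ X ⨯ Y := prod.map (D.map prod.fst) (𝟙 _) ≫
    prod.lift (prod.map (𝟙 _) (prod.map (D.map prod.snd) (𝟙 A)) ≫ f) (prod.snd ≫ g)
  have hF : dag F = prod.lift (prod.map (D.map prod.snd) (𝟙 A) ≫ dag f) g := by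
    rw [hC.dag_map_fst_comp_lift, hC.param]
    simp
  rw [← hF, hC.ddag]
  congr 1
  ext <;> simp [F, canMap_eq_lift_map]

theorem dag_lift_canMap_comp_right (hC : IsGuardedConway D p @dag) {X Y A : C}
    (h : D.obj Y ⨯ A ⟶ X) (g : D.obj X ⨯ (D.obj Y ⨯ A) ⟶ Y) :
    dag (prod.lift (prod.map (D.map prod.snd) (𝟙 A) ≫ h) (canMap D X Y A ≫ g)) =
      dag (prod.map (D.map prod.snd) (𝟙 A) ≫
        prod.lift h (prod.lift (h ≫ p.app X) (𝟙 _) ≫ g)) := by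
  set G : D.obj (X ⨯ Y) ⨯ (D.obj (X ⨯ Y) ⨯ A) ⟶ X ⨯ Y := prod.map (D.map prod.fst) (𝟙 _) ≫
    prod.lift (prod.snd ≫ prod.map (D.map prod.snd) (𝟙 A) ≫ h)
      (prod.map (𝟙 _) (prod.map (D.map prod.snd) (𝟙 A)) ≫ g)
  have hG : dag G = prod.map (D.map prod.snd) (𝟙 A) ≫
      prod.lift h (prod.lift (h ≫ p.app X) (𝟙 _) ≫ g) := by
    rw [hC.dag_map_fst_comp_lift, hC.dag_snd_comp]
    ext <;> simp [prod.comp_lift_assoc]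
  rw [← hG, hC.ddag]
  congr 1
  ext <;> simp [G, canMap_eq_lift_map]

end IsGuardedConway

/-- **Bekič identity.**  Every guarded Conway category satisfies the Bekič identity:
for `f : ◇X × ◇Y × A ⟶ X` and `g : ◇X × ◇Y × A ⟶ Y`,
`(⟨f,g⟩ ∘ (can × id_A))† = ⟨e_L†, e_R†⟩` where `can = ⟨◇π₁, ◇π₂⟩ : ◇(X × Y) ⟶ ◇X × ◇Y`,
`e_R = g ∘ ⟨p_X ∘ f†, id⟩` and `e_L = f ∘ (id × ⟨p_Y ∘ e_R†, id⟩)`. -/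
theorem guardedConway_bekic {C : Type u} [Category.{v} C] [HasFiniteProducts C]
    (D : C ⥤ C) (p : 𝟭 C ⟶ D)
    (dag : ∀ {X Y : C}, (D.obj X ⨯ Y ⟶ X) → (Y ⟶ X))
    (hC : IsGuardedConway D p @dag) :
    ∀ {X Y A : C} (f : D.obj X ⨯ (D.obj Y ⨯ A) ⟶ X) (g : D.obj X ⨯ (D.obj Y ⨯ A) ⟶ Y),
      dag (prod.lift (prod.fst ≫ D.map prod.fst)
            (prod.lift (prod.fst ≫ D.map prod.snd) prod.snd) ≫ prod.lift f g) =
      prod.lift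
        (dag (prod.map (𝟙 (D.obj X))
              (prod.lift (dag (prod.lift (dag f ≫ p.app X) (𝟙 (D.obj Y ⨯ A)) ≫ g) ≫ p.app Y)
                (𝟙 A)) ≫ f))
        (dag (prod.lift (dag f ≫ p.app X) (𝟙 (D.obj Y ⨯ A)) ≫ g)) := by
  intro X Y A f g
  calc dag (IsGuardedConway.canMap D X Y A ≫ prod.lift f g)
      _ = dag (prod.lift (IsGuardedConway.canMap D X Y A ≫ f)
            (IsGuardedConway.canMap D X Y A ≫ g)) := by rw [prod.comp_lift]
      _ = dag (prod.map (D.map prod.snd) (𝟙 A) ≫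
            prod.lift (dag f) (prod.lift (dag f ≫ p.app X) (𝟙 _) ≫ g)) := by
        rw [hC.dag_lift_canMap_comp_left, hC.dag_lift_canMap_comp_right]
      _ = _ := by rw [hC.dag_map_snd_comp_lift, hC.param]
end

section
/- If a guarded fixpoint category (C, ◇, †) satisfies the fixpoint identity, the parameter identity, the composition identity and the Bekič identity, then it also satisfies the double dagger identity, and hence is a guarded Conway category. -/
/-!
Instantiate the Bekič identity with `g = f`. On the right, the fixpoint identity turns
`e_R = f ∘ ⟨p ∘ f†, id⟩` back into `f†`, so the second component is `f††`. On the left,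
`⟨f, f⟩ = Δ ∘ f`, and the composition identity with `g = Δ` moves the diagonal inside the
delay, where `(◇Δ × id) ∘ can` collapses to `Δ_{◇X} × id`; so the left side is
`Δ ∘ (f ∘ (Δ × id))†`, whose second component is `(f ∘ (Δ × id))†`.
-/

open CategoryTheory CategoryTheory.Limits

universe v u

section GuardedFixpoint

variable {C : Type u} [Category.{v} C] [HasBinaryProducts C] (D : C ⥤ C)

theorem prod_map_map_diag_comp_can (X Y : C) :
    prod.map (D.map (diag X)) (𝟙 Y) ≫
      prod.lift (prod.fst ≫ D.map prod.fst) (prod.lift (prod.fst ≫ D.map prod.snd) prod.snd) =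
    prod.lift prod.fst (𝟙 (D.obj X ⨯ Y)) := by
  ext <;> simp only [Category.assoc, prod.lift_fst, prod.lift_snd, prod.map_fst_assoc,
    prod.map_snd, ← D.map_comp, diag, Category.id_comp, D.map_id, Category.comp_id]

variable (dag : ∀ {X Y : C}, (D.obj X ⨯ Y ⟶ X) → (Y ⟶ X))

theorem lift_dagger_comp_eq_dagger (p : 𝟭 C ⟶ D)
    (hfix : ∀ {X Y : C} (f : D.obj X ⨯ Y ⟶ X),
      dag f = prod.lift (dag f) (𝟙 Y) ≫ prod.map (p.app X) (𝟙 Y) ≫ f)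
    {X Y : C} (f : D.obj X ⨯ Y ⟶ X) :
    prod.lift (dag f ≫ p.app X) (𝟙 Y) ≫ f = dag f := by
  simpa only [prod.lift_map_assoc, Category.comp_id] using (hfix f).symm

theorem dagger_can_comp_lift_self
    (hcomp : ∀ {X Y Z : C} (f : D.obj X ⨯ Y ⟶ Z) (g : Z ⟶ X),
      dag (f ≫ g) = dag (prod.map (D.map g) (𝟙 Y) ≫ f) ≫ g)
    {X Y : C} (f : D.obj X ⨯ (D.obj X ⨯ Y) ⟶ X) :
    dag (prod.lift (prod.fst ≫ D.map prod.fst)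
        (prod.lift (prod.fst ≫ D.map prod.snd) prod.snd) ≫ prod.lift f f) =
      dag (prod.lift prod.fst (𝟙 (D.obj X ⨯ Y)) ≫ f) ≫ diag X := by
  rw [← prod.comp_diag, ← Category.assoc, hcomp, ← Category.assoc,
    prod_map_map_diag_comp_can]

end GuardedFixpoint

theorem guardedConway_of_bekic_general {C : Type u} [Category.{v} C] [HasFiniteProducts C]
    (D : C ⥤ C) (p : 𝟭 C ⟶ D)
    (dag : ∀ {X Y : C}, (D.obj X ⨯ Y ⟶ X) → (Y ⟶ X))
    -- (†) fixpoint identity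
    (hfix : ∀ {X Y : C} (f : D.obj X ⨯ Y ⟶ X),
      dag f = prod.lift (dag f) (𝟙 Y) ≫ prod.map (p.app X) (𝟙 Y) ≫ f)
    -- (C) composition identity
    (hcomp : ∀ {X Y Z : C} (f : D.obj X ⨯ Y ⟶ Z) (g : Z ⟶ X),
      dag (f ≫ g) = dag (prod.map (D.map g) (𝟙 Y) ≫ f) ≫ g)
    -- (Bč) Bekič identity
    (hbekic : ∀ {X Y A : C} (f : D.obj X ⨯ (D.obj Y ⨯ A) ⟶ X) (g : D.obj X ⨯ (D.obj Y ⨯ A) ⟶ Y),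
      dag (prod.lift (prod.fst ≫ D.map prod.fst)
            (prod.lift (prod.fst ≫ D.map prod.snd) prod.snd) ≫ prod.lift f g) =
      prod.lift
        (dag (prod.map (𝟙 (D.obj X))
              (prod.lift (dag (prod.lift (dag f ≫ p.app X) (𝟙 (D.obj Y ⨯ A)) ≫ g) ≫ p.app Y)
                (𝟙 A)) ≫ f))
        (dag (prod.lift (dag f ≫ p.app X) (𝟙 (D.obj Y ⨯ A)) ≫ g))) :
    -- (††) double dagger identity
    ∀ {X Y : C} (f : D.obj X ⨯ (D.obj X ⨯ Y) ⟶ X),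
      dag (dag f) = dag (prod.lift prod.fst (𝟙 (D.obj X ⨯ Y)) ≫ f) := by
  intro X Y f
  have bekic_snd := congrArg (· ≫ prod.snd) (hbekic f f)
  simp only [dagger_can_comp_lift_self D dag hcomp, lift_dagger_comp_eq_dagger D dag p hfix,
    Category.assoc, prod.lift_snd, Category.comp_id] at bekic_snd
  exact bekic_snd.symm

/-- If a guarded fixpoint operator satisfies the fixpoint, parameter, composition and
Bekič identities, then it also satisfies the double dagger identity, i.e. it is a
guarded Conway category. -/
theorem guardedConway_of_bekic {C : Type u} [Category.{v} C] [HasFiniteProducts C]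
    (D : C ⥤ C) (p : 𝟭 C ⟶ D)
    (dag : ∀ {X Y : C}, (D.obj X ⨯ Y ⟶ X) → (Y ⟶ X))
    -- (†) fixpoint identity
    (hfix : ∀ {X Y : C} (f : D.obj X ⨯ Y ⟶ X),
      dag f = prod.lift (dag f) (𝟙 Y) ≫ prod.map (p.app X) (𝟙 Y) ≫ f)
    -- (P) parameter identity
    (hparam : ∀ {X Y Z : C} (f : D.obj X ⨯ Y ⟶ X) (h : Z ⟶ Y),
      dag (prod.map (𝟙 (D.obj X)) h ≫ f) = h ≫ dag f)
    -- (C) composition identity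
    (hcomp : ∀ {X Y Z : C} (f : D.obj X ⨯ Y ⟶ Z) (g : Z ⟶ X),
      dag (f ≫ g) = dag (prod.map (D.map g) (𝟙 Y) ≫ f) ≫ g)
    -- (Bč) Bekič identity
    (hbekic : ∀ {X Y A : C} (f : D.obj X ⨯ (D.obj Y ⨯ A) ⟶ X) (g : D.obj X ⨯ (D.obj Y ⨯ A) ⟶ Y),
      dag (prod.lift (prod.fst ≫ D.map prod.fst)
            (prod.lift (prod.fst ≫ D.map prod.snd) prod.snd) ≫ prod.lift f g) =
      prod.lift
        (dag (prod.map (𝟙 (D.obj X))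
              (prod.lift (dag (prod.lift (dag f ≫ p.app X) (𝟙 (D.obj Y ⨯ A)) ≫ g) ≫ p.app Y)
                (𝟙 A)) ≫ f))
        (dag (prod.lift (dag f ≫ p.app X) (𝟙 (D.obj Y ⨯ A)) ≫ g))) :
    -- (††) double dagger identity
    ∀ {X Y : C} (f : D.obj X ⨯ (D.obj X ⨯ Y) ⟶ X),
      dag (dag f) = dag (prod.lift prod.fst (𝟙 (D.obj X ⨯ Y)) ≫ f) :=
  guardedConway_of_bekic_general D p dag hfix hcomp hbekic
end

section
/- Every unique guarded fixpoint category satisfies dinaturality: for all f : ◇X × A → Y and g : ◇Y × A → X, (g ∘ ⟨p_Y ∘ f, π_r⟩)† = g ∘ ⟨p_Y ∘ h†, id_A⟩, where h = f ∘ ⟨p_X ∘ g, π_r⟩ : ◇Y × A → Y. -/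
open CategoryTheory CategoryTheory.Limits

universe v u

/-!
If `t` solves the fixpoint equation of `h = f ∘ ⟨p_X ∘ g, π_r⟩`, then unfolding `t` once gives
`t = f ∘ ⟨p_X ∘ s, id⟩` for `s = g ∘ ⟨p_Y ∘ t, id⟩`, and substituting this into `s` shows that `s`
solves the fixpoint equation of `g ∘ ⟨p_Y ∘ f, π_r⟩`. Uniqueness of solutions, applied to `t = h†`,
then identifies `s` with `(g ∘ ⟨p_Y ∘ f, π_r⟩)†`.
-/

namespace CategoryTheory

variable {C : Type u} [Category.{v} C] [HasFiniteProducts C] {D : C ⥤ C} (p : 𝟭 C ⟶ D)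

def IsGuardedFixpoint {X Y : C} (f : D.obj X ⨯ Y ⟶ X) (s : Y ⟶ X) : Prop :=
  s = prod.lift s (𝟙 Y) ≫ prod.map (p.app X) (𝟙 Y) ≫ f

variable {p}

theorem isGuardedFixpoint_iff {X Y : C} (f : D.obj X ⨯ Y ⟶ X) (s : Y ⟶ X) :
    IsGuardedFixpoint p f s ↔ s = prod.lift (s ≫ p.app X) (𝟙 Y) ≫ f := by
  rw [IsGuardedFixpoint, prod.lift_map_assoc, Category.comp_id]

theorem prod_lift_id_comp_lift_snd {X Z W A : C} (s : A ⟶ X) (f : X ⨯ A ⟶ Z) (h : Z ⨯ A ⟶ W) :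
    prod.lift s (𝟙 A) ≫ prod.lift f prod.snd ≫ h = prod.lift (prod.lift s (𝟙 A) ≫ f) (𝟙 A) ≫ h := by
  rw [← Category.assoc, prod.comp_lift, prod.lift_snd]

theorem IsGuardedFixpoint.dinaturality {X Y A : C} {f : D.obj X ⨯ A ⟶ Y} {g : D.obj Y ⨯ A ⟶ X}
    {t : A ⟶ Y} (ht : IsGuardedFixpoint p (prod.lift (g ≫ p.app X) prod.snd ≫ f) t) :
    IsGuardedFixpoint p (prod.lift (f ≫ p.app Y) prod.snd ≫ g)
      (prod.lift (t ≫ p.app Y) (𝟙 A) ≫ g) := by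
  rw [isGuardedFixpoint_iff] at ht ⊢
  have ht' : t = prod.lift (prod.lift (t ≫ p.app Y) (𝟙 A) ≫ g ≫ p.app X) (𝟙 A) ≫ f := by
    rwa [prod_lift_id_comp_lift_snd] at ht
  conv_lhs => rw [ht']
  rw [prod_lift_id_comp_lift_snd, Category.assoc, Category.assoc]

end CategoryTheory

/-- **Dinaturality holds in every unique guarded fixpoint category.**
For `f : ◇X × A ⟶ Y` and `g : ◇Y × A ⟶ X`,
`(g ∘ ⟨p_Y ∘ f, π_r⟩)† = g ∘ ⟨p_Y ∘ h†, id_A⟩` where `h = f ∘ ⟨p_X ∘ g, π_r⟩`. -/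
theorem uniqueGuardedFixpoint_dinaturality
    {C : Type u} [Category.{v} C] [HasFiniteProducts C]
    (D : C ⥤ C) (p : 𝟭 C ⟶ D)
    (dag : ∀ {X Y : C}, (D.obj X ⨯ Y ⟶ X) → (Y ⟶ X))
    -- `dag f` is a solution of the fixpoint equation
    (hfix : ∀ {X Y : C} (f : D.obj X ⨯ Y ⟶ X),
      dag f = prod.lift (dag f) (𝟙 Y) ≫ prod.map (p.app X) (𝟙 Y) ≫ f)
    -- and it is the unique one
    (huniq : ∀ {X Y : C} (f : D.obj X ⨯ Y ⟶ X) (s : Y ⟶ X),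
      s = prod.lift s (𝟙 Y) ≫ prod.map (p.app X) (𝟙 Y) ≫ f → s = dag f) :
    ∀ {X Y A : C} (f : D.obj X ⨯ A ⟶ Y) (g : D.obj Y ⨯ A ⟶ X),
      dag (prod.lift (f ≫ p.app Y) prod.snd ≫ g) =
        prod.lift (dag (prod.lift (g ≫ p.app X) prod.snd ≫ f) ≫ p.app Y) (𝟙 A) ≫ g := by
  intro X Y A f g
  exact (huniq _ _ (IsGuardedFixpoint.dinaturality (hfix _))).symm
end

section
/- Let (C, ◇, †) be a guarded Conway category such that ◇ preserves finite products and is well-pointed, i.e. ◇p_X = p_{◇X} for all X. Then † satisfies dinaturality: for all f : ◇X × A → Y and g : ◇Y × A → X, (g ∘ ⟨p_Y ∘ f, π_r⟩)† = g ∘ ⟨p_Y ∘ h†, id_A⟩, where h = f ∘ ⟨p_X ∘ g, π_r⟩ : ◇Y × A → Y. -/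
open CategoryTheory CategoryTheory.Limits

universe v u

/-!
With `g' = (p_Y × id) ≫ g`, the composition identity rewrites the left-hand side as
`⟨(◇g' × id) ≫ f, π_r⟩† ≫ g'`, so everything reduces to the dagger of a morphism
`⟨w, π_r⟩ : ◇(Y × A) × A ⟶ Y × A` that passes its parameter through. Splitting
`◇(Y × A) ≅ ◇Y × ◇A` and separating the two occurrences of the recursion variable, the double
dagger identity turns this into an iterated dagger: the inner one solves for the `Y`-component
alone, the outer one only has to feed `p_A` into the `◇A`-slot. This gives
`⟨w, π_r⟩† = ⟨t†, id⟩` with `t = ⟨(id × p_A) ≫ can⁻¹, π_r⟩ ≫ w`, and well-pointedness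
identifies `t` with `h`.
-/

attribute [local simp] prod.lift_fst prod.lift_snd prod.lift_fst_assoc prod.lift_snd_assoc

section

variable {C : Type u} [Category.{v} C] [HasFiniteProducts C] {D : C ⥤ C} {p : 𝟭 C ⟶ D}

lemma app_prod_eq_map_comp_inv_prodComparison (X Y : C) [IsIso (prodComparison D X Y)] :
    p.app (X ⨯ Y) = prod.map (p.app X) (p.app Y) ≫ inv (prodComparison D X Y) := by
  rw [IsIso.eq_comp_inv, prodComparison_natural_of_natTrans]
  simp [prodComparison]

lemma prodMap_app_comp_inv_prodComparison_comp_map (Y A : C)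
    [IsIso (prodComparison D Y A)] [IsIso (prodComparison D (D.obj Y) A)]
    (hY : D.map (p.app Y) = p.app (D.obj Y)) :
    prod.map (𝟙 (D.obj Y)) (p.app A) ≫ inv (prodComparison D Y A) ≫
      D.map (prod.map (p.app Y) (𝟙 A)) = p.app (D.obj Y ⨯ A) := by
  rw [prodComparison_inv_natural, app_prod_eq_map_comp_inv_prodComparison, hY]
  simp

end

namespace IsGuardedConway

variable {C : Type u} [Category.{v} C] [HasFiniteProducts C] {D : C ⥤ C} {p : 𝟭 C ⟶ D}
  {dag : ∀ {X Y : C}, (D.obj X ⨯ Y ⟶ X) → (Y ⟶ X)}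

lemma dag_comp_eq_of_comp_eq_snd_comp (hC : IsGuardedConway D p @dag) {X P B : C}
    (m : D.obj X ⨯ P ⟶ X) (k : X ⟶ B) (r : P ⟶ B) (hm : m ≫ k = prod.snd ≫ r) :
    dag m ≫ k = r := by
  rw [hC.fix m, Category.assoc, Category.assoc, hm]
  simp

lemma dag_prodMap_map_snd (hC : IsGuardedConway D p @dag) (A : C) :
    dag (prod.map (D.map (prod.snd : D.obj A ⨯ A ⟶ A)) (𝟙 A)) = prod.lift (p.app A) (𝟙 A) := by
  have hsnd := hC.dag_comp_eq_of_comp_eq_snd_comp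
    (prod.map (D.map (prod.snd : D.obj A ⨯ A ⟶ A)) (𝟙 A)) prod.snd (𝟙 A) (by simp)
  refine prod.hom_ext ?_ (by simpa using hsnd)
  nth_rw 1 [hC.fix]
  simp only [prod.map_map, Category.comp_id, prod.lift_map, prod.lift_fst, Functor.id_obj]
  rw [← p.naturality, Functor.id_map, reassoc_of% hsnd]

lemma dag_lift_prodMap_map_snd_comp (hC : IsGuardedConway D p @dag) {Y A : C}
    (σ : D.obj A ⨯ A ⟶ Y) :
    dag (prod.lift (prod.map (D.map prod.snd) (𝟙 A) ≫ σ) prod.snd :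
        D.obj (Y ⨯ A) ⨯ A ⟶ Y ⨯ A) =
      prod.lift (prod.lift (p.app A) (𝟙 A) ≫ σ) (𝟙 A) := by
  have hfactor : prod.lift (prod.map (D.map prod.snd) (𝟙 A) ≫ σ) prod.snd =
      prod.map (D.map (prod.snd : Y ⨯ A ⟶ A)) (𝟙 A) ≫ prod.lift σ prod.snd := by
    ext <;> simp
  have hmap : prod.map (D.map (prod.lift σ prod.snd)) (𝟙 A) ≫ prod.map (D.map prod.snd) (𝟙 A) =
      prod.map (D.map (prod.snd : D.obj A ⨯ A ⟶ A)) (𝟙 A) := by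
    simp [← D.map_comp]
  rw [hfactor, hC.comp, hmap, hC.dag_prodMap_map_snd]
  ext <;> simp

lemma dag_prodMap_map_fst_comp (hC : IsGuardedConway D p @dag) {Y P B : C}
    (Θ : D.obj Y ⨯ P ⟶ Y ⨯ B) (r : P ⟶ B) (hΘ : Θ ≫ prod.snd = prod.snd ≫ r) :
    dag (prod.map (D.map prod.fst) (𝟙 P) ≫ Θ) = prod.lift (dag (Θ ≫ prod.fst)) r := by
  refine prod.hom_ext ?_ ?_
  · rw [prod.lift_fst, hC.comp Θ prod.fst]
  · rw [prod.lift_snd]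
    exact hC.dag_comp_eq_of_comp_eq_snd_comp _ _ _ (by simp [hΘ])

lemma dag_lift_snd (hC : IsGuardedConway D p @dag) {Y A : C}
    (e : D.obj Y ⨯ D.obj A ⟶ D.obj (Y ⨯ A)) (he : prodComparison D Y A ≫ e = 𝟙 _)
    (w : D.obj (Y ⨯ A) ⨯ A ⟶ Y) :
    dag (prod.lift w prod.snd) =
      prod.lift (dag (prod.lift (prod.map (𝟙 _) (p.app A) ≫ e) prod.snd ≫ w)) (𝟙 A) := by
  set τ : D.obj Y ⨯ (D.obj A ⨯ A) ⟶ Y :=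
    prod.lift (prod.map (𝟙 _) prod.fst ≫ e) (prod.snd ≫ prod.snd) ≫ w with hτ
  have hsplit : prod.lift (prod.fst ≫ D.map prod.fst) (prod.map (D.map prod.snd) (𝟙 A)) ≫
      prod.lift (prod.map (𝟙 _) prod.fst ≫ e) (prod.snd ≫ prod.snd) = 𝟙 (D.obj (Y ⨯ A) ⨯ A) := by
    ext
    · simp only [prod.comp_lift, prod.lift_map_assoc, Category.comp_id, prod.map_fst,
        prod.lift_snd_assoc, prod.map_snd, prod.lift_fst, Category.id_comp]
      rw [← prod.comp_lift, Category.assoc]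
      exact (prod.fst ≫= he).trans (Category.comp_id _)
    · simp
  set Θ : D.obj Y ⨯ (D.obj (Y ⨯ A) ⨯ A) ⟶ Y ⨯ A :=
    prod.lift (prod.map (𝟙 _) (prod.map (D.map prod.snd) (𝟙 A)) ≫ τ) (prod.snd ≫ prod.snd) with hΘ
  have hdiag : prod.lift prod.fst (𝟙 _) ≫ prod.map (D.map prod.fst) (𝟙 _) ≫ Θ =
      prod.lift w prod.snd := by
    ext
    · simp only [hΘ, hτ, prod.comp_lift, prod.map_map_assoc, Category.comp_id, Category.id_comp,
        prod.map_snd_assoc, prod.lift_map_assoc, prod.lift_snd_assoc, prod.lift_fst]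
      rw [← Category.assoc, hsplit, Category.id_comp]
    · simp [hΘ]
  calc dag (prod.lift w prod.snd)
      = dag (dag (prod.map (D.map prod.fst) (𝟙 _) ≫ Θ)) := by rw [hC.ddag, hdiag]
    _ = dag (prod.lift (prod.map (D.map prod.snd) (𝟙 A) ≫ dag τ) prod.snd) := by
        rw [hC.dag_prodMap_map_fst_comp _ prod.snd (by simp [hΘ]), hΘ, prod.lift_fst, hC.param]
    _ = prod.lift (prod.lift (p.app A) (𝟙 A) ≫ dag τ) (𝟙 A) :=
        hC.dag_lift_prodMap_map_snd_comp _
    _ = _ := by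
        rw [← hC.param, hτ, ← Category.assoc]
        congr 3
        ext <;> simp

end IsGuardedConway

theorem guardedConway_dinaturality_general
    {C : Type u} [Category.{v} C] [HasFiniteProducts C]
    (D : C ⥤ C) (p : 𝟭 C ⟶ D)
    (dag : ∀ {X Y : C}, (D.obj X ⨯ Y ⟶ X) → (Y ⟶ X))
    (hC : IsGuardedConway D p @dag)
    -- ◇ preserves binary products
    (hcan : ∀ X Y : C,
      IsIso (prod.lift (D.map (prod.fst : X ⨯ Y ⟶ X)) (D.map (prod.snd : X ⨯ Y ⟶ Y))))
    -- ◇ is well-pointed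
    (hwp : ∀ X : C, D.map (p.app X) = p.app (D.obj X)) :
    ∀ {X Y A : C} (f : D.obj X ⨯ A ⟶ Y) (g : D.obj Y ⨯ A ⟶ X),
      dag (prod.lift (f ≫ p.app Y) prod.snd ≫ g) =
        prod.lift (dag (prod.lift (g ≫ p.app X) prod.snd ≫ f) ≫ p.app Y) (𝟙 A) ≫ g := by
  intro X Y A f g
  have : IsIso (prodComparison D Y A) := hcan Y A
  have : IsIso (prodComparison D (D.obj Y) A) := hcan (D.obj Y) A
  set g' : Y ⨯ A ⟶ X := prod.map (p.app Y) (𝟙 A) ≫ g with hg'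
  have hpar : prod.lift (prod.map (𝟙 _) (p.app A) ≫ inv (prodComparison D Y A)) prod.snd ≫
      prod.map (D.map g') (𝟙 A) ≫ f = prod.lift (g ≫ p.app X) prod.snd ≫ f := by
    simp only [prod.lift_map_assoc, hg', D.map_comp, Category.assoc,
      reassoc_of% prodMap_app_comp_inv_prodComparison_comp_map Y A (hwp Y)]
    rw [← p.naturality]
    simp
  calc dag (prod.lift (f ≫ p.app Y) prod.snd ≫ g)
      = dag (prod.lift f prod.snd ≫ g') := by simp [hg']
    _ = dag (prod.map (D.map g') (𝟙 A) ≫ prod.lift f prod.snd) ≫ g' := hC.comp _ _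
    _ = dag (prod.lift (prod.map (D.map g') (𝟙 A) ≫ f) prod.snd) ≫ g' := by simp
    _ = _ := by
        rw [hC.dag_lift_snd _ (IsIso.hom_inv_id _), hpar]
        simp [hg']

/-- **Dinaturality from the Conway axioms.**  If `(C, ◇, †)` is a guarded Conway category
such that `◇` preserves finite products (the canonical morphisms
`can = ⟨◇π_ℓ, ◇π_r⟩ : ◇(X × Y) ⟶ ◇X × ◇Y` and `◇1 ⟶ 1` are isomorphisms) and `◇` is
well-pointed (`◇p_X = p_{◇X}`), then `†` satisfies dinaturality. -/
theorem guardedConway_dinaturality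
    {C : Type u} [Category.{v} C] [HasFiniteProducts C]
    (D : C ⥤ C) (p : 𝟭 C ⟶ D)
    (dag : ∀ {X Y : C}, (D.obj X ⨯ Y ⟶ X) → (Y ⟶ X))
    (hC : IsGuardedConway D p @dag)
    -- ◇ preserves binary products
    (hcan : ∀ X Y : C,
      IsIso (prod.lift (D.map (prod.fst : X ⨯ Y ⟶ X)) (D.map (prod.snd : X ⨯ Y ⟶ Y))))
    -- ◇ preserves the terminal object
    (hterm : IsIso (terminal.from (D.obj (⊤_ C))))
    -- ◇ is well-pointed
    (hwp : ∀ X : C, D.map (p.app X) = p.app (D.obj X)) :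
    ∀ {X Y A : C} (f : D.obj X ⨯ A ⟶ Y) (g : D.obj Y ⨯ A ⟶ X),
      dag (prod.lift (f ≫ p.app Y) prod.snd ≫ g) =
        prod.lift (dag (prod.lift (g ≫ p.app X) prod.snd ≫ f) ≫ p.app Y) (𝟙 A) ≫ g :=
  guardedConway_dinaturality_general D p dag hC hcan hwp
end

section
/- Let (C, ◇, Tr) be a guarded traced category. Define †_Tr by f^{†_Tr} = Tr^X_{A,X}(⟨f, f⟩) for f : ◇X × A → X. Then (C, ◇, †_Tr) is a guarded Conway category (†_Tr satisfies the fixpoint, parameter, composition and double dagger identities), and moreover the trace is recovered: for every f : ◇X × A → X × B, π_r ∘ f ∘ (p_X × id_A) ∘ ⟨(π_ℓ ∘ f)^{†_Tr}, id_A⟩ = Tr^X_{A,B}(f). -/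
/-! Superposing followed by left tightening along the diagonal of `A` shows
`Tr ⟨u, ⟨u, π_r⟩ ≫ m⟩ = ⟨u†, id⟩ ≫ m`; yanking and sliding evaluate a trace whose feedback
output ignores the feedback input, `Tr ⟨π_r ≫ a, b⟩ = ⟨a ≫ p, id⟩ ≫ b`; and (V2) followed by
sliding along the diagonal of `X` collapses a double trace with two equal feedback components
into a single trace. Viewing `f = ⟨u, k⟩` as the double trace of `⟨π_r ≫ u, ⟨π_r ≫ u, k⟩⟩`
gives the recovery formula, whose instance `f = ⟨g, g⟩` is the fixpoint identity. The parameter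
and composition identities are tightening and sliding, and the double dagger identity is again
the diagonal collapse. -/

open CategoryTheory CategoryTheory.Limits

universe v u

/-- A guarded trace operator: a family `Tr : Hom(◇X × A, X × B) → Hom(A, B)` satisfying
left/right tightening, sliding (together: naturality), vanishing (V1), (V2),
superposing (S) and yanking (Y). -/
structure IsGuardedTrace {C : Type u} [Category.{v} C] [HasFiniteProducts C]
    (D : C ⥤ C) (p : 𝟭 C ⟶ D)
    (Tr : ∀ {X A B : C}, (D.obj X ⨯ A ⟶ X ⨯ B) → (A ⟶ B)) : Prop where
  left_tightening : ∀ {X A A' B : C} (f : D.obj X ⨯ A ⟶ X ⨯ B) (g : A' ⟶ A),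
      Tr (prod.map (𝟙 (D.obj X)) g ≫ f) = g ≫ Tr f
  right_tightening : ∀ {X A B B' : C} (f : D.obj X ⨯ A ⟶ X ⨯ B) (g : B ⟶ B'),
      Tr (f ≫ prod.map (𝟙 X) g) = Tr f ≫ g
  sliding : ∀ {X X' A B : C} (f : D.obj X ⨯ A ⟶ X' ⨯ B) (g : X' ⟶ X),
      Tr (f ≫ prod.map g (𝟙 B)) = Tr (prod.map (D.map g) (𝟙 A) ≫ f)
  vanishing₁ : ∀ {A B : C} (f : D.obj (⊤_ C) ⨯ A ⟶ (⊤_ C) ⨯ B),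
      Tr f = prod.lift (terminal.from A ≫ p.app (⊤_ C)) (𝟙 A) ≫ f ≫ prod.snd
  vanishing₂ : ∀ {X Y A B : C} (f : D.obj X ⨯ (D.obj Y ⨯ A) ⟶ X ⨯ (Y ⨯ B)),
      Tr (Tr f) =
      Tr (prod.lift (prod.fst ≫ D.map prod.fst)
            (prod.lift (prod.fst ≫ D.map prod.snd) prod.snd) ≫ f ≫
          prod.lift (prod.lift prod.fst (prod.snd ≫ prod.fst)) (prod.snd ≫ prod.snd))
  superposing : ∀ {X A B E : C} (f : D.obj X ⨯ A ⟶ X ⨯ B),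
      Tr (prod.lift
            (prod.lift prod.fst (prod.snd ≫ prod.fst) ≫ f ≫ prod.fst)
            (prod.lift (prod.lift prod.fst (prod.snd ≫ prod.fst) ≫ f ≫ prod.snd)
              ((prod.snd : D.obj X ⨯ (A ⨯ E) ⟶ A ⨯ E) ≫ prod.snd))) =
        prod.map (Tr f) (𝟙 E)
  yanking : ∀ X : C,
      Tr (prod.lift prod.snd prod.fst : D.obj X ⨯ X ⟶ X ⨯ D.obj X) = p.app X

namespace IsGuardedTrace

variable {C : Type u} [Category.{v} C] [HasFiniteProducts C] {D : C ⥤ C} {p : 𝟭 C ⟶ D}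
  {Tr : ∀ {X A B : C}, (D.obj X ⨯ A ⟶ X ⨯ B) → (A ⟶ B)}

attribute [local simp] prod.lift_fst prod.lift_snd prod.lift_fst_assoc prod.lift_snd_assoc
  prod.comp_lift_assoc

theorem trace_lift_lift_snd (hTr : IsGuardedTrace D p @Tr) {X A B : C} (f : D.obj X ⨯ A ⟶ X ⨯ B) :
    Tr (prod.lift (f ≫ prod.fst) (prod.lift (f ≫ prod.snd) prod.snd)) =
      prod.lift (Tr f) (𝟙 A) := by
  have h := hTr.left_tightening (prod.lift
      (prod.lift prod.fst (prod.snd ≫ prod.fst) ≫ f ≫ prod.fst)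
      (prod.lift (prod.lift prod.fst (prod.snd ≫ prod.fst) ≫ f ≫ prod.snd)
        ((prod.snd : D.obj X ⨯ (A ⨯ A) ⟶ A ⨯ A) ≫ prod.snd))) (diag A)
  rw [hTr.superposing] at h
  convert h using 2
  · ext <;> simp
  · ext <;> simp

theorem trace_lift_snd (hTr : IsGuardedTrace D p @Tr) {A B : C} (c : D.obj A ⨯ A ⟶ B) :
    Tr (prod.lift prod.snd c) = prod.lift (p.app A) (𝟙 A) ≫ c := by
  have h := hTr.trace_lift_lift_snd (prod.lift prod.snd prod.fst : D.obj A ⨯ A ⟶ A ⨯ D.obj A)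
  simp only [prod.lift_fst, prod.lift_snd, prod.lift_fst_snd, hTr.yanking] at h
  rw [← h, ← hTr.right_tightening]
  congr 1
  ext <;> simp

theorem trace_lift_snd_comp (hTr : IsGuardedTrace D p @Tr) {X A B : C} (a : A ⟶ X)
    (b : D.obj X ⨯ A ⟶ B) :
    Tr (prod.lift (prod.snd ≫ a) b) = prod.lift (a ≫ p.app X) (𝟙 A) ≫ b :=
  calc Tr (prod.lift (prod.snd ≫ a) b)
      _ = Tr (prod.lift prod.snd b ≫ prod.map a (𝟙 B)) := by congr 1; ext <;> simp
      _ = Tr (prod.lift prod.snd (prod.map (D.map a) (𝟙 A) ≫ b)) := by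
        rw [hTr.sliding]; congr 1; ext <;> simp
      _ = prod.lift (a ≫ p.app X) (𝟙 A) ≫ b := by
        rw [hTr.trace_lift_snd, ← Category.assoc]; congr 1; ext <;> simp [← p.naturality]

theorem trace_lift_lift_snd_comp (hTr : IsGuardedTrace D p @Tr) {X A B : C}
    (u : D.obj X ⨯ A ⟶ X) (m : X ⨯ A ⟶ B) :
    Tr (prod.lift u (prod.lift u prod.snd ≫ m)) = prod.lift (Tr (prod.lift u u)) (𝟙 A) ≫ m := by
  have h := hTr.trace_lift_lift_snd (prod.lift u u)
  simp only [prod.lift_fst, prod.lift_snd] at h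
  rw [← h, ← hTr.right_tightening]
  congr 1
  ext <;> simp

theorem trace_trace_lift_lift (hTr : IsGuardedTrace D p @Tr) {X A B : C}
    (g : D.obj X ⨯ (D.obj X ⨯ A) ⟶ X) (k : D.obj X ⨯ (D.obj X ⨯ A) ⟶ B) :
    Tr (Tr (prod.lift g (prod.lift g k))) =
      Tr (prod.lift (prod.lift prod.fst (𝟙 _) ≫ g) (prod.lift prod.fst (𝟙 _) ≫ k)) := by
  set can : D.obj (X ⨯ X) ⨯ A ⟶ D.obj X ⨯ (D.obj X ⨯ A) :=
    prod.lift (prod.fst ≫ D.map prod.fst) (prod.lift (prod.fst ≫ D.map prod.snd) prod.snd)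
  have hcan : prod.map (D.map (diag X)) (𝟙 A) ≫ can = prod.lift prod.fst (𝟙 _) := by
    ext <;> simp [can, ← Functor.map_comp]
  rw [hTr.vanishing₂, show can ≫ prod.lift g (prod.lift g k) ≫
      prod.lift (prod.lift prod.fst (prod.snd ≫ prod.fst)) (prod.snd ≫ prod.snd) =
      prod.lift (can ≫ g) (can ≫ k) ≫ prod.map (diag X) (𝟙 B) by ext <;> simp,
    hTr.sliding, prod.comp_lift, reassoc_of% hcan, reassoc_of% hcan]

theorem dagger_recovers_trace (hTr : IsGuardedTrace D p @Tr) {X A B : C}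
    (f : D.obj X ⨯ A ⟶ X ⨯ B) :
    prod.lift (Tr (prod.lift (f ≫ prod.fst) (f ≫ prod.fst))) (𝟙 A) ≫
      prod.map (p.app X) (𝟙 A) ≫ f ≫ prod.snd = Tr f := by
  set u := f ≫ prod.fst
  calc _ = Tr (prod.lift u (prod.lift u prod.snd ≫ prod.map (p.app X) (𝟙 A) ≫ f ≫ prod.snd)) :=
        (hTr.trace_lift_lift_snd_comp u _).symm
    _ = Tr (Tr (prod.lift (prod.snd ≫ u)
          (prod.lift (prod.snd ≫ u) (prod.map (𝟙 _) prod.snd ≫ f ≫ prod.snd)))) := by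
        rw [hTr.trace_lift_snd_comp]; congr 1; ext <;> simp
    _ = Tr f := by
        rw [hTr.trace_trace_lift_lift]; congr 1; ext <;> simp [u]

theorem dagger_fix (hTr : IsGuardedTrace D p @Tr) {X Y : C} (f : D.obj X ⨯ Y ⟶ X) :
    Tr (prod.lift f f) =
      prod.lift (Tr (prod.lift f f)) (𝟙 Y) ≫ prod.map (p.app X) (𝟙 Y) ≫ f := by
  simpa using (hTr.dagger_recovers_trace (prod.lift f f)).symm

theorem dagger_param (hTr : IsGuardedTrace D p @Tr) {X Y Z : C} (f : D.obj X ⨯ Y ⟶ X)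
    (h : Z ⟶ Y) :
    Tr (prod.lift (prod.map (𝟙 _) h ≫ f) (prod.map (𝟙 _) h ≫ f)) = h ≫ Tr (prod.lift f f) := by
  rw [← hTr.left_tightening, prod.comp_lift]

theorem dagger_comp (hTr : IsGuardedTrace D p @Tr) {X Y Z : C} (f : D.obj X ⨯ Y ⟶ Z)
    (g : Z ⟶ X) :
    Tr (prod.lift (f ≫ g) (f ≫ g)) =
      Tr (prod.lift (prod.map (D.map g) (𝟙 Y) ≫ f) (prod.map (D.map g) (𝟙 Y) ≫ f)) ≫ g :=
  calc Tr (prod.lift (f ≫ g) (f ≫ g))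
      _ = Tr (prod.lift f (f ≫ g) ≫ prod.map g (𝟙 X)) := by congr 1; ext <;> simp
      _ = Tr (prod.lift (prod.map (D.map g) (𝟙 Y) ≫ f) (prod.map (D.map g) (𝟙 Y) ≫ f) ≫
            prod.map (𝟙 Z) g) := by rw [hTr.sliding]; congr 1; ext <;> simp
      _ = _ := hTr.right_tightening _ _

theorem dagger_dagger (hTr : IsGuardedTrace D p @Tr) {X Y : C}
    (f : D.obj X ⨯ (D.obj X ⨯ Y) ⟶ X) :
    Tr (prod.lift (Tr (prod.lift f f)) (Tr (prod.lift f f))) =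
      Tr (prod.lift (prod.lift prod.fst (𝟙 _) ≫ f) (prod.lift prod.fst (𝟙 _) ≫ f)) := by
  have hpair :
      Tr (prod.lift f (prod.lift f f)) = prod.lift (Tr (prod.lift f f)) (Tr (prod.lift f f)) := by
    rw [show prod.lift f (prod.lift f f) = prod.lift f f ≫ prod.map (𝟙 X) (diag X) by
      ext <;> simp, hTr.right_tightening]
    ext <;> simp
  rw [← hpair, hTr.trace_trace_lift_lift]

end IsGuardedTrace

/-- **From guarded traces to guarded Conway operators.**  If `(C, ◇, Tr)` is a guarded
traced category, then the operator `f† = Tr ⟨f, f⟩` makes `(C, ◇, †)` a guarded Conway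
category, and moreover the trace is recovered from this dagger:
`π_r ∘ f ∘ (p_X × id_A) ∘ ⟨(π_ℓ ∘ f)†, id_A⟩ = Tr f`. -/
theorem guardedTrace_to_guardedConway
    {C : Type u} [Category.{v} C] [HasFiniteProducts C]
    (D : C ⥤ C) (p : 𝟭 C ⟶ D)
    (Tr : ∀ {X A B : C}, (D.obj X ⨯ A ⟶ X ⨯ B) → (A ⟶ B))
    (hTr : IsGuardedTrace D p @Tr) :
    IsGuardedConway D p (fun {X A} (f : D.obj X ⨯ A ⟶ X) => Tr (prod.lift f f)) ∧
    ∀ (X A B : C) (f : D.obj X ⨯ A ⟶ X ⨯ B),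
      prod.lift (Tr (prod.lift (f ≫ prod.fst) (f ≫ prod.fst))) (𝟙 A) ≫
          prod.map (p.app X) (𝟙 A) ≫ f ≫ prod.snd = Tr f :=
  ⟨⟨hTr.dagger_fix, hTr.dagger_param, hTr.dagger_comp, hTr.dagger_dagger⟩,
    fun _ _ _ => hTr.dagger_recovers_trace⟩
end

section
/- Let (C, ◇, †) be a guarded Conway category. Define Tr_† by Tr_†^X_{A,B}(f) = π_r ∘ f ∘ (p_X × id_A) ∘ ⟨(π_ℓ ∘ f)†, id_A⟩ for f : ◇X × A → X × B. Then (C, ◇, Tr_†) is a guarded traced category (Tr_† satisfies left and right tightening, sliding, both vanishing axioms, superposing and yanking), and moreover the dagger is recovered: Tr_†^X_{A,X}(⟨f, f⟩) = f† for every f : ◇X × A → X. -/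
/-!
Left and right tightening, superposing and the recovery of `f†` are instances of the parameter
and fixpoint identities, and sliding is the composition identity. Yanking holds because
`π_r† = id` by the fixpoint identity, and (V1) because any map into `1` is unique. The real
content is (V2): the dagger of `⟨F, G⟩ ∘ can` is computed componentwise by the Bekič identity,
which follows from the double dagger identity once the inner dagger of a map that uses only
the `X`-part of `◇(X × Y)` is unrolled with the composition and fixpoint identities.
-/

open CategoryTheory CategoryTheory.Limits

universe v u

variable {C : Type u} [Category.{v} C] {D : C ⥤ C} {p : 𝟭 C ⟶ D}

theorem app_comp_map_of_id {X Y : C} (g : X ⟶ Y) : p.app X ≫ D.map g = g ≫ p.app Y :=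
  (p.naturality g).symm

theorem app_comp_map_of_id_assoc {X Y Z : C} (g : X ⟶ Y) (k : D.obj Y ⟶ Z) :
    p.app X ≫ D.map g ≫ k = g ≫ p.app Y ≫ k := by
  rw [← Category.assoc, app_comp_map_of_id, Category.assoc]

attribute [local simp] prod.lift_fst prod.lift_snd prod.lift_fst_assoc prod.lift_snd_assoc
  app_comp_map_of_id app_comp_map_of_id_assoc

variable [HasFiniteProducts C]

/-- The trace `Tr_†` induced by a dagger. -/
noncomputable def dagTrace (p : 𝟭 C ⟶ D)
    (dag : ∀ {X Y : C}, (D.obj X ⨯ Y ⟶ X) → (Y ⟶ X)) {X A B : C}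
    (f : D.obj X ⨯ A ⟶ X ⨯ B) : A ⟶ B :=
  prod.lift (dag (f ≫ prod.fst)) (𝟙 A) ≫ prod.map (p.app X) (𝟙 A) ≫ f ≫ prod.snd

theorem dagTrace_eq_lift (dag : ∀ {X Y : C}, (D.obj X ⨯ Y ⟶ X) → (Y ⟶ X))
    {X A B : C} (f : D.obj X ⨯ A ⟶ X ⨯ B) :
    dagTrace p @dag f = prod.lift (dag (f ≫ prod.fst) ≫ p.app X) (𝟙 A) ≫ f ≫ prod.snd := by
  simp [dagTrace, prod.lift_map_assoc]

namespace IsGuardedConway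

variable {dag : ∀ {X Y : C}, (D.obj X ⨯ Y ⟶ X) → (Y ⟶ X)}

theorem fix_lift (h : IsGuardedConway D p @dag) {X Y : C} (f : D.obj X ⨯ Y ⟶ X) :
    dag f = prod.lift (dag f ≫ p.app X) (𝟙 Y) ≫ f := by
  conv_lhs => rw [h.fix f]
  simp [prod.lift_map_assoc]

theorem dag_snd (h : IsGuardedConway D p @dag) (X : C) :
    dag (prod.snd : D.obj X ⨯ X ⟶ X) = 𝟙 X := by
  simpa using h.fix_lift (prod.snd : D.obj X ⨯ X ⟶ X)

theorem dag_map_comp (h : IsGuardedConway D p @dag) {X Z B : C} (Θ : D.obj X ⨯ B ⟶ Z)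
    (g : Z ⟶ X) :
    dag (prod.map (D.map g) (𝟙 B) ≫ Θ) = prod.lift (dag (Θ ≫ g) ≫ p.app X) (𝟙 B) ≫ Θ := by
  conv_lhs => rw [h.fix_lift]
  rw [h.comp Θ g]
  simp [prod.lift_map_assoc]

theorem bekic (h : IsGuardedConway D p @dag) {X Y A : C}
    (H : D.obj X ⨯ (D.obj Y ⨯ A) ⟶ X ⨯ Y) :
    dag (prod.lift (prod.fst ≫ D.map prod.fst)
          (prod.lift (prod.fst ≫ D.map prod.snd) prod.snd) ≫ H) =
    prod.lift
      (prod.lift (dag (prod.lift (dag (H ≫ prod.fst) ≫ p.app X) (𝟙 _) ≫ H ≫ prod.snd) ≫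
          p.app Y) (𝟙 A) ≫ dag (H ≫ prod.fst))
      (dag (prod.lift (dag (H ≫ prod.fst) ≫ p.app X) (𝟙 _) ≫ H ≫ prod.snd)) := by
  set q : D.obj (X ⨯ Y) ⨯ A ⟶ D.obj Y ⨯ A := prod.map (D.map prod.snd) (𝟙 A)
  set F := H ≫ prod.fst
  set G := prod.lift (dag F ≫ p.app X) (𝟙 (D.obj Y ⨯ A)) ≫ H ≫ prod.snd
  have inner : dag (prod.map (D.map prod.fst) (𝟙 _) ≫ prod.map (𝟙 (D.obj X)) q ≫ H) =
      q ≫ prod.lift (dag F) G := by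
    have shift : prod.lift (q ≫ dag F ≫ p.app X) (𝟙 _) ≫ prod.map (𝟙 (D.obj X)) q =
        q ≫ prod.lift (dag F ≫ p.app X) (𝟙 _) := by
      ext <;> simp
    rw [h.dag_map_comp, Category.assoc, h.param, Category.assoc q, reassoc_of% shift]
    congr 1
    ext
    · rw [prod.lift_fst, Category.assoc]
      exact (h.fix_lift F).symm
    · simp [G]
  have can : prod.lift (prod.fst ≫ D.map prod.fst)
        (prod.lift (prod.fst ≫ D.map prod.snd) prod.snd) =
      prod.lift (prod.fst : D.obj (X ⨯ Y) ⨯ A ⟶ _) (𝟙 _) ≫ prod.map (D.map prod.fst) (𝟙 _) ≫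
        prod.map (𝟙 (D.obj X)) q := by
    ext <;> simp [q]
  rw [can, Category.assoc, Category.assoc, ← h.ddag, inner, h.dag_map_comp, prod.lift_snd,
    prod.comp_lift, ← h.fix_lift]

theorem isGuardedTrace_dagTrace (h : IsGuardedConway D p @dag) :
    IsGuardedTrace D p (dagTrace p @dag) where
  left_tightening f g := by
    rw [dagTrace_eq_lift, dagTrace_eq_lift, Category.assoc, h.param]
    simp [prod.comp_lift_assoc]
  right_tightening f g := by
    simp [dagTrace_eq_lift]
  sliding f g := by
    have : (f ≫ prod.map g (𝟙 _)) ≫ prod.fst = (f ≫ prod.fst) ≫ g := by simp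
    rw [dagTrace_eq_lift, dagTrace_eq_lift, this, h.comp]
    simp
  vanishing₁ f := by
    rw [dagTrace_eq_lift, Subsingleton.elim (dag (f ≫ prod.fst)) (terminal.from _)]
  vanishing₂ f := by
    simp only [dagTrace_eq_lift, Category.assoc, h.bekic]
    simp [prod.comp_lift_assoc]
  superposing {X A _ E} f := by
    have : prod.lift prod.fst (prod.snd ≫ prod.fst) =
        prod.map (𝟙 (D.obj X)) (prod.fst : A ⨯ E ⟶ A) := by
      ext <;> simp
    rw [dagTrace_eq_lift, dagTrace_eq_lift, prod.lift_fst, this, h.param]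
    ext <;> simp [prod.comp_lift_assoc]
  yanking X := by
    simp [dagTrace_eq_lift, h.dag_snd]

theorem dagTrace_lift_self (h : IsGuardedConway D p @dag) {X A : C} (f : D.obj X ⨯ A ⟶ X) :
    dagTrace p @dag (prod.lift f f) = dag f := by
  rw [dagTrace_eq_lift, prod.lift_fst, prod.lift_snd, ← h.fix_lift]

end IsGuardedConway

/-- **From guarded Conway operators to guarded traces.**  If `(C, ◇, †)` is a guarded
Conway category, then `Tr f = π_r ∘ f ∘ (p_X × id_A) ∘ ⟨(π_ℓ ∘ f)†, id_A⟩` is a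
guarded trace operator, and moreover the dagger is recovered: `Tr ⟨f, f⟩ = f†`. -/
theorem guardedConway_to_guardedTrace
    {C : Type u} [Category.{v} C] [HasFiniteProducts C]
    (D : C ⥤ C) (p : 𝟭 C ⟶ D)
    (dag : ∀ {X Y : C}, (D.obj X ⨯ Y ⟶ X) → (Y ⟶ X))
    (hdag : IsGuardedConway D p @dag) :
    IsGuardedTrace D p (fun {X A B} (f : D.obj X ⨯ A ⟶ X ⨯ B) =>
      prod.lift (dag (f ≫ prod.fst)) (𝟙 A) ≫ prod.map (p.app X) (𝟙 A) ≫ f ≫ prod.snd) ∧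
    ∀ (X A : C) (f : D.obj X ⨯ A ⟶ X),
      prod.lift (dag (prod.lift f f ≫ prod.fst)) (𝟙 A) ≫
          prod.map (p.app X) (𝟙 A) ≫ prod.lift f f ≫ prod.snd = dag f :=
  ⟨hdag.isGuardedTrace_dagTrace, fun _ _ => hdag.dagTrace_lift_self⟩
end

section
/- Let (C, ◇, Tr) be a guarded traced category whose trace is uniform: whenever f : ◇X × A → X × B, f' : ◇X' × A → X' × B and h : X → X' satisfy (h × id_B) ∘ f = f' ∘ (◇h × id_A), then Tr^X_{A,B}(f) = Tr^{X'}_{A,B}(f'). Then the induced dagger †_Tr, given by f^{†_Tr} = Tr^X_{A,X}(⟨f, f⟩), satisfies uniformity: whenever h ∘ f = g ∘ (◇h × id_A) for f : ◇X × A → X, g : ◇X' × A → X', h : X → X', one has h ∘ f^{†_Tr} = g^{†_Tr}. -/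
open CategoryTheory CategoryTheory.Limits

universe v u

/-- **Uniform traces induce uniform daggers.**  If `(C, ◇, Tr)` is a guarded traced
category whose trace operator is uniform, then the induced dagger `f† = Tr ⟨f, f⟩`
satisfies uniformity. -/
theorem uniformGuardedTrace_to_uniformDagger
    {C : Type u} [Category.{v} C] [HasFiniteProducts C]
    (D : C ⥤ C) (p : 𝟭 C ⟶ D)
    (Tr : ∀ {X A B : C}, (D.obj X ⨯ A ⟶ X ⨯ B) → (A ⟶ B))
    (hTr : IsGuardedTrace D p @Tr)
    -- Tr is uniform
    (hunif : ∀ {X X' A B : C} (f : D.obj X ⨯ A ⟶ X ⨯ B) (f' : D.obj X' ⨯ A ⟶ X' ⨯ B)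
      (h : X ⟶ X'), f ≫ prod.map h (𝟙 B) = prod.map (D.map h) (𝟙 A) ≫ f' →
        Tr f = Tr f') :
    -- the induced dagger is uniform
    ∀ {X X' A : C} (f : D.obj X ⨯ A ⟶ X) (g : D.obj X' ⨯ A ⟶ X') (h : X ⟶ X'),
      f ≫ h = prod.map (D.map h) (𝟙 A) ≫ g →
        Tr (prod.lift f f) ≫ h = Tr (prod.lift g g) := by
  intro X X' A f g h hfg
  rw [← hTr.right_tightening (prod.lift f f) h]
  apply hunif _ _ h
  apply Limits.prod.hom_ext <;>
    simp [prod.comp_lift, hfg]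
end

section
/- Let (C, ◇, †) be a uniform guarded Conway category, i.e. a guarded Conway category whose dagger satisfies uniformity: whenever h ∘ f = g ∘ (◇h × id_A) for f : ◇X × A → X, g : ◇X' × A → X', h : X → X', one has h ∘ f† = g†. Then the induced trace Tr_†, given by Tr_†^X_{A,B}(f) = π_r ∘ f ∘ (p_X × id_A) ∘ ⟨(π_ℓ ∘ f)†, id_A⟩, is uniform: whenever f : ◇X × A → X × B, f' : ◇X' × A → X' × B and h : X → X' satisfy (h × id_B) ∘ f = f' ∘ (◇h × id_A), then Tr_†^X_{A,B}(f) = Tr_†^{X'}_{A,B}(f'). -/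
open CategoryTheory CategoryTheory.Limits

universe v u

/-- **Uniform daggers induce uniform traces.**  If `(C, ◇, †)` is a uniform guarded
Conway category, then the induced trace
`Tr f = π_r ∘ f ∘ (p_X × id_A) ∘ ⟨(π_ℓ ∘ f)†, id_A⟩` is uniform. -/
theorem uniformGuardedConway_to_uniformTrace
    {C : Type u} [Category.{v} C] [HasFiniteProducts C]
    (D : C ⥤ C) (p : 𝟭 C ⟶ D)
    (dag : ∀ {X Y : C}, (D.obj X ⨯ Y ⟶ X) → (Y ⟶ X))
    (hdag : IsGuardedConway D p @dag)
    -- the dagger is uniform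
    (hunif : ∀ {X X' A : C} (f : D.obj X ⨯ A ⟶ X) (g : D.obj X' ⨯ A ⟶ X') (h : X ⟶ X'),
      f ≫ h = prod.map (D.map h) (𝟙 A) ≫ g → dag f ≫ h = dag g) :
    -- the induced trace is uniform
    ∀ {X X' A B : C} (f : D.obj X ⨯ A ⟶ X ⨯ B) (f' : D.obj X' ⨯ A ⟶ X' ⨯ B)
      (h : X ⟶ X'), f ≫ prod.map h (𝟙 B) = prod.map (D.map h) (𝟙 A) ≫ f' →
        prod.lift (dag (f ≫ prod.fst)) (𝟙 A) ≫ prod.map (p.app X) (𝟙 A) ≫ f ≫ prod.snd =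
        prod.lift (dag (f' ≫ prod.fst)) (𝟙 A) ≫ prod.map (p.app X') (𝟙 A) ≫ f' ≫ prod.snd := by
  intro X X' A B f f' h hcomm
  have hd : dag (f ≫ prod.fst) ≫ h = dag (f' ≫ prod.fst) := by
    apply hunif
    calc (f ≫ prod.fst) ≫ h = f ≫ prod.map h (𝟙 B) ≫ prod.fst := by
          rw [prod.map_fst]; simp [Category.assoc]
      _ = prod.map (D.map h) (𝟙 A) ≫ f' ≫ prod.fst := by
          rw [← Category.assoc, hcomm, Category.assoc]
  rw [← hd]
  have hl : prod.lift (dag (f ≫ prod.fst) ≫ h) (𝟙 A)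
      = prod.lift (dag (f ≫ prod.fst)) (𝟙 A) ≫ prod.map h (𝟙 A) := by
    simp
  rw [hl, Category.assoc]
  congr 1
  symm
  have hnat : h ≫ p.app X' = p.app X ≫ D.map h := (p.naturality h)
  calc prod.map h (𝟙 A) ≫ prod.map (p.app X') (𝟙 A) ≫ f' ≫ prod.snd
      = prod.map (p.app X) (𝟙 A) ≫ prod.map (D.map h) (𝟙 A) ≫ f' ≫ prod.snd := by
        rw [← Category.assoc, ← Category.assoc, prod.map_map, hnat, ← prod.map_map]; simp [Category.assoc]
    _ = prod.map (p.app X) (𝟙 A) ≫ f ≫ prod.snd := by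
        rw [← Category.assoc (prod.map (D.map h) (𝟙 A)), ← hcomm]
        simp
end

section
/- Let (C, ◇, †) be a guarded Conway category and let Tr_† be given by Tr_†^X_{A,B}(f) = π_r ∘ f ∘ (p_X × id_A) ∘ ⟨(π_ℓ ∘ f)†, id_A⟩. For every f : ◇X × A → X × B set h = f ∘ (◇π_ℓ × id_A) : ◇(X × B) × A → X × B. Then Tr_†^X_{A,B}(f) = π_r ∘ h†. -/
open CategoryTheory CategoryTheory.Limits

universe v u

/-- **An alternative description of the induced trace.**  In a guarded Conway category,
for `f : ◇X × A ⟶ X × B`, setting `h = f ∘ (◇π_ℓ × id_A) : ◇(X × B) × A ⟶ X × B`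
one has `Tr_† f = π_r ∘ h†`, where
`Tr_† f = π_r ∘ f ∘ (p_X × id_A) ∘ ⟨(π_ℓ ∘ f)†, id_A⟩`. -/
theorem guardedConway_trace_eq
    {C : Type u} [Category.{v} C] [HasFiniteProducts C]
    (D : C ⥤ C) (p : 𝟭 C ⟶ D)
    (dag : ∀ {X Y : C}, (D.obj X ⨯ Y ⟶ X) → (Y ⟶ X))
    (hdag : IsGuardedConway D p @dag) :
    ∀ {X A B : C} (f : D.obj X ⨯ A ⟶ X ⨯ B),
      prod.lift (dag (f ≫ prod.fst)) (𝟙 A) ≫ prod.map (p.app X) (𝟙 A) ≫ f ≫ prod.snd =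
        dag (prod.map (D.map prod.fst) (𝟙 A) ≫ f) ≫ prod.snd := by
  intro X A B f
  set h : D.obj (X ⨯ B) ⨯ A ⟶ X ⨯ B := prod.map (D.map prod.fst) (𝟙 A) ≫ f with hh
  have hc : dag (f ≫ prod.fst) = dag h ≫ prod.fst := hdag.comp f prod.fst
  have hnat : p.app (X ⨯ B) ≫ D.map prod.fst = prod.fst ≫ p.app X := (p.naturality prod.fst).symm
  calc prod.lift (dag (f ≫ prod.fst)) (𝟙 A) ≫ prod.map (p.app X) (𝟙 A) ≫ f ≫ prod.snd
      = prod.lift (dag h) (𝟙 A) ≫ prod.map (p.app (X ⨯ B)) (𝟙 A) ≫ h ≫ prod.snd := by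
        rw [hc, hh]
        rw [show prod.map (p.app (X ⨯ B)) (𝟙 A) ≫ (prod.map (D.map prod.fst) (𝟙 A) ≫ f) ≫ prod.snd
            = (prod.map (p.app (X ⨯ B) ≫ D.map prod.fst) (𝟙 A)) ≫ f ≫ prod.snd by
          simp [prod.map_map]]
        rw [hnat]
        simp [prod.map_map, ← Category.assoc, prod.lift_map]
    _ = dag h ≫ prod.snd := by
        conv_rhs => rw [hdag.fix h]
        simp
end

section
/- Let F : C → D be a functor preserving finite products between categories with finite products carrying pointed endofunctors (◇^C, p^C) and (◇^D, p^D), such that ◇^D ∘ F = F ∘ ◇^C and p^D_{FX} = F(p^C_X) for all X. Suppose C and D carry guarded Conway operators †_C and †_D and F preserves daggers: F(f^{†_C}) = (F''f)^{†_D} for every f : ◇^C X × A → X, where F''f is Ff precomposed with the canonical product-comparison isomorphism ◇^D FX × FA ≅ F(◇^C X × A). Then F preserves the induced trace operators: F(Tr_{†_C}^X_{A,B}(f)) = Tr_{†_D}^{FX}_{FA,FB}(F'f) for every f : ◇^C X × A → X × B, where Tr_†^X_{A,B}(f) = π_r ∘ f ∘ (p_X × id_A) ∘ ⟨(π_ℓ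 ∘ f)†, id_A⟩ and F'f denotes Ff conjugated by the canonical isomorphisms ◇^D FX × FA ≅ F(◇^C X × A) and F(X × B) ≅ FX × FB. -/
open CategoryTheory CategoryTheory.Limits

universe v u v' u'

/-! The trace is a composite of a dagger, a point, a pairing and a projection. `F` preserves each
of these up to the product comparison isomorphisms and the comparison `e : ◇ᴰ F X ⟶ F ◇ᶜ X`
(here `eqToHom`), and these comparisons cancel in pairs along the composite. -/

section

variable {C : Type u} [Category.{v} C] [HasFiniteProducts C]
  {D : Type u'} [Category.{v'} D] [HasFiniteProducts D]

noncomputable def daggerTrace {DC : C ⥤ C} (p : 𝟭 C ⟶ DC)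
    (dag : ∀ {X Y : C}, (DC.obj X ⨯ Y ⟶ X) → (Y ⟶ X)) {X A B : C}
    (f : DC.obj X ⨯ A ⟶ X ⨯ B) : A ⟶ B :=
  prod.lift (dag (f ≫ prod.fst)) (𝟙 A) ≫ prod.map (p.app X) (𝟙 A) ≫ f ≫ prod.snd

theorem map_prod_lift_comp_prodComparison (F : C ⥤ D) {Z X A : C} (g : Z ⟶ X) (h : Z ⟶ A) :
    F.map (prod.lift g h) ≫ prodComparison F X A = prod.lift (F.map g) (F.map h) := by
  ext <;> simp only [Category.assoc, prodComparison_fst, prodComparison_snd, ← F.map_comp,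
    prod.lift_fst, prod.lift_snd]

theorem map_prod_lift_id (F : C ⥤ D) [PreservesFiniteProducts F] {X A : C} (g : A ⟶ X) :
    F.map (prod.lift g (𝟙 A)) =
      prod.lift (F.map g) (𝟙 (F.obj A)) ≫ inv (prodComparison F X A) := by
  rw [IsIso.eq_comp_inv, map_prod_lift_comp_prodComparison, F.map_id]

theorem map_daggerTrace (F : C ⥤ D) [PreservesFiniteProducts F]
    {DC : C ⥤ C} {pC : 𝟭 C ⟶ DC} {DD : D ⥤ D} {pD : 𝟭 D ⟶ DD}
    {dagC : ∀ {X Y : C}, (DC.obj X ⨯ Y ⟶ X) → (Y ⟶ X)}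
    {dagD : ∀ {X Y : D}, (DD.obj X ⨯ Y ⟶ X) → (Y ⟶ X)}
    {X A B : C} (e : DD.obj (F.obj X) ⟶ F.obj (DC.obj X))
    (hp : pD.app (F.obj X) ≫ e = F.map (pC.app X)) (f : DC.obj X ⨯ A ⟶ X ⨯ B)
    (hdag : F.map (dagC (f ≫ prod.fst)) =
      dagD (prod.map e (𝟙 (F.obj A)) ≫ inv (prodComparison F (DC.obj X) A) ≫
        F.map (f ≫ prod.fst))) :
    F.map (daggerTrace pC dagC f) = daggerTrace pD dagD
      (prod.map e (𝟙 (F.obj A)) ≫ inv (prodComparison F (DC.obj X) A) ≫ F.map f ≫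
        prodComparison F X B) := by
  have hdag_fst : dagD ((prod.map e (𝟙 (F.obj A)) ≫ inv (prodComparison F (DC.obj X) A) ≫
      F.map f ≫ prodComparison F X B) ≫ prod.fst) = F.map (dagC (f ≫ prod.fst)) := by
    simp only [hdag, Category.assoc, prodComparison_fst, F.map_comp]
  have hpoint : prod.map (pD.app (F.obj X)) (𝟙 (F.obj A)) ≫ prod.map e (𝟙 (F.obj A)) ≫
      inv (prodComparison F (DC.obj X) A) =
      inv (prodComparison F X A) ≫ F.map (prod.map (pC.app X) (𝟙 A)) := by
    rw [prod.map_map_assoc, hp, prodComparison_inv_natural, F.map_id, Category.comp_id]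
  rw [daggerTrace, daggerTrace, hdag_fst]
  simp only [F.map_comp, map_prod_lift_id, Category.assoc, prodComparison_snd, reassoc_of% hpoint]
end

theorem daggerPreserving_preserves_trace_general
    {C : Type u} [Category.{v} C] [HasFiniteProducts C]
    {D : Type u'} [Category.{v'} D] [HasFiniteProducts D]
    (DC : C ⥤ C) (pC : 𝟭 C ⟶ DC) (DD : D ⥤ D) (pD : 𝟭 D ⟶ DD)
    (dagC : ∀ {X Y : C}, (DC.obj X ⨯ Y ⟶ X) → (Y ⟶ X))
    (dagD : ∀ {X Y : D}, (DD.obj X ⨯ Y ⟶ X) → (Y ⟶ X))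
    (F : C ⥤ D) [PreservesFiniteProducts F]
    -- `F` commutes strictly with the delays ...
    (heq : F ⋙ DD = DC ⋙ F)
    -- ... and with the points
    (hp : ∀ X : C,
      pD.app (F.obj X) ≫ eqToHom (Functor.congr_obj heq X) = F.map (pC.app X))
    -- `F` preserves the daggers (up to the canonical comparison isomorphism)
    (hdag : ∀ {X A : C} (f : DC.obj X ⨯ A ⟶ X),
      F.map (dagC f) =
        dagD (prod.map (eqToHom (Functor.congr_obj heq X)) (𝟙 (F.obj A)) ≫
              inv (prodComparison F (DC.obj X) A) ≫ F.map f)) :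
    -- then `F` preserves the induced traces
    ∀ {X A B : C} (f : DC.obj X ⨯ A ⟶ X ⨯ B),
      F.map (prod.lift (dagC (f ≫ prod.fst)) (𝟙 A) ≫
          prod.map (pC.app X) (𝟙 A) ≫ f ≫ prod.snd) =
        prod.lift
            (dagD ((prod.map (eqToHom (Functor.congr_obj heq X)) (𝟙 (F.obj A)) ≫
              inv (prodComparison F (DC.obj X) A) ≫ F.map f ≫ prodComparison F X B) ≫
                prod.fst))
            (𝟙 (F.obj A)) ≫
          prod.map (pD.app (F.obj X)) (𝟙 (F.obj A)) ≫
          (prod.map (eqToHom (Functor.congr_obj heq X)) (𝟙 (F.obj A)) ≫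
            inv (prodComparison F (DC.obj X) A) ≫ F.map f ≫ prodComparison F X B) ≫
          prod.snd := by
  intro X A B f
  exact map_daggerTrace F (eqToHom (Functor.congr_obj heq X)) (hp X) f (hdag _)

/-- **Dagger-preserving functors preserve the induced traces.**
Let `F : C ⥤ D` preserve finite products, commute strictly with the delays
(`F ⋙ ◇ᴰ = ◇ᶜ ⋙ F` and `pᴰ_{FX} = F pᶜ_X`), and preserve the guarded Conway operators
(up to the canonical product comparison isomorphisms).  Then `F` preserves the traces
induced by the daggers, `Tr_† f = π_r ∘ f ∘ (p_X × id_A) ∘ ⟨(π_ℓ ∘ f)†, id_A⟩`. -/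
theorem daggerPreserving_preserves_trace
    {C : Type u} [Category.{v} C] [HasFiniteProducts C]
    {D : Type u'} [Category.{v'} D] [HasFiniteProducts D]
    (DC : C ⥤ C) (pC : 𝟭 C ⟶ DC) (DD : D ⥤ D) (pD : 𝟭 D ⟶ DD)
    (dagC : ∀ {X Y : C}, (DC.obj X ⨯ Y ⟶ X) → (Y ⟶ X))
    (dagD : ∀ {X Y : D}, (DD.obj X ⨯ Y ⟶ X) → (Y ⟶ X))
    (hdagC : IsGuardedConway DC pC @dagC) (hdagD : IsGuardedConway DD pD @dagD)
    (F : C ⥤ D) [PreservesFiniteProducts F]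
    -- `F` commutes strictly with the delays ...
    (heq : F ⋙ DD = DC ⋙ F)
    -- ... and with the points
    (hp : ∀ X : C,
      pD.app (F.obj X) ≫ eqToHom (Functor.congr_obj heq X) = F.map (pC.app X))
    -- `F` preserves the daggers (up to the canonical comparison isomorphism)
    (hdag : ∀ {X A : C} (f : DC.obj X ⨯ A ⟶ X),
      F.map (dagC f) =
        dagD (prod.map (eqToHom (Functor.congr_obj heq X)) (𝟙 (F.obj A)) ≫
              inv (prodComparison F (DC.obj X) A) ≫ F.map f)) :
    -- then `F` preserves the induced traces
    ∀ {X A B : C} (f : DC.obj X ⨯ A ⟶ X ⨯ B),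
      F.map (prod.lift (dagC (f ≫ prod.fst)) (𝟙 A) ≫
          prod.map (pC.app X) (𝟙 A) ≫ f ≫ prod.snd) =
        prod.lift
            (dagD ((prod.map (eqToHom (Functor.congr_obj heq X)) (𝟙 (F.obj A)) ≫
              inv (prodComparison F (DC.obj X) A) ≫ F.map f ≫ prodComparison F X B) ≫
                prod.fst))
            (𝟙 (F.obj A)) ≫
          prod.map (pD.app (F.obj X)) (𝟙 (F.obj A)) ≫
          (prod.map (eqToHom (Functor.congr_obj heq X)) (𝟙 (F.obj A)) ≫
            inv (prodComparison F (DC.obj X) A) ≫ F.map f ≫ prodComparison F X B) ≫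
          prod.snd :=
  daggerPreserving_preserves_trace_general DC pC DD pD dagC dagD F heq hp hdag
end
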